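/- arXiv:2210.09721 — 12 statements merged into one kernel-verified Lean document; each statement's English description precedes it below -/
import Mathlib

section
/- Let n ∈ ℕ, let L ⊆ {1,…,n}, and for each i let f_i : ℝ → ℝ be globally Lipschitz with constant L_{pi} > 0 (i.e. |f_i(a) − f_i(b)| ≤ L_{pi}|a − b| for all a,b ∈ ℝ) when i ∈ L, and f_i = id with L_{pi} = 1 when i ∉ L. Let W = diag(L_{p1},…,L_{pn}), let A ∈ ℝ^{n×n}, B ∈ ℝ^{n×m}, and set Ã = W A. If there exists a symmetric positive definite matrix P ∈ ℝ^{n×n} with P_{ij} = P_{ji} = 0 for every i ∈ L and every j ≠ i, such that Ã^T P Ã − P is negative definite, then the discrete-time system x(k+1) = f(A x(k) + B u(k)) (f applied componentwise) is incrementally input-to-state stable (δISS). -/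
open Matrix Filter

noncomputable def eNorm {ι : Type*} [Fintype ι] (v : ι → ℝ) : ℝ :=
  Real.sqrt (∑ i, (v i) ^ 2)

def IsKFun (γ : ℝ → ℝ) : Prop :=
  ContinuousOn γ (Set.Ici 0) ∧ StrictMonoOn γ (Set.Ici 0) ∧ γ 0 = 0

def IsKInfFun (γ : ℝ → ℝ) : Prop :=
  IsKFun γ ∧ Tendsto γ atTop atTop

def IsKLFun (β : ℝ → ℕ → ℝ) : Prop :=
  (∀ k, ContinuousOn (fun s => β s k) (Set.Ici 0)) ∧
  (∀ k, StrictMonoOn (fun s => β s k) (Set.Ici 0)) ∧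
  (∀ k, β 0 k = 0) ∧
  (∀ s : ℝ, 0 < s → StrictAnti (fun k => β s k)) ∧
  (∀ s : ℝ, 0 < s → Tendsto (fun k => β s k) atTop (nhds 0))

def traj {σ υ : Type*} (F : σ → υ → σ) (x0 : σ) (u : ℕ → υ) : ℕ → σ
  | 0 => x0
  | k + 1 => F (traj F x0 u k) (u k)

def DeltaISS {ι κ : Type*} [Fintype ι] [Fintype κ]
    (F : (ι → ℝ) → (κ → ℝ) → (ι → ℝ)) : Prop :=
  ∃ β : ℝ → ℕ → ℝ, ∃ γ : ℝ → ℝ, IsKLFun β ∧ IsKInfFun γ ∧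
    ∀ (k : ℕ) (x01 x02 : ι → ℝ) (d : ℝ), 0 ≤ d →
      ∀ u1 u2 : ℕ → κ → ℝ, (∀ j, eNorm (u1 j - u2 j) ≤ d) →
        eNorm (traj F x01 u1 k - traj F x02 u2 k) ≤ β (eNorm (x01 - x02)) k + γ d

/-!
`V e = √(eᵀ P e)` is an incremental Lyapunov function. Since `P` has no off-diagonal entries in
the rows and columns of the nonlinear coordinates, `eᵀ P e` is monotone in `|eᵢ|` for `i ∈ L`,
so the sector bound `|fᵢ a - fᵢ b| ≤ L_{pi} |a - b|` lets one replace the increment of `f(z)` by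
`W` times the increment of `z`. With `Ã = W A`, the increment of the state is then dominated by
`Ã e + W B Δu`; `Ãᵀ P Ã ≺ P` makes `Ã` a strict contraction for `V`, and the triangle inequality
for `V` gives `V e⁺ ≤ ρ V e + c ‖Δu‖` with `ρ < 1`. Iterating, and comparing `V` with the
Euclidean norm, gives `β s k = C ρᵏ s` and a linear `γ`.
-/

section Homogeneous

variable {E : Type*} [NormedAddCommGroup E] [NormedSpace ℝ E] {q : E → ℝ}

lemma eq_sq_norm_mul_of_homogeneous (hq : ∀ (c : ℝ) x, q (c • x) = c ^ 2 * q x) {x : E}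
    (hx : x ≠ 0) : q x = ‖x‖ ^ 2 * q (‖x‖⁻¹ • x) := by
  rw [hq, ← mul_assoc, ← mul_pow, mul_inv_cancel₀ (norm_ne_zero_iff.mpr hx), one_pow, one_mul]

variable [FiniteDimensional ℝ E]

lemma exists_pos_mul_sq_norm_le (hcont : Continuous q) (hq : ∀ (c : ℝ) x, q (c • x) = c ^ 2 * q x)
    (hpos : ∀ x, x ≠ 0 → 0 < q x) : ∃ α, 0 < α ∧ ∀ x, α * ‖x‖ ^ 2 ≤ q x := by
  obtain ⟨α, hα, hmin⟩ := (isCompact_sphere (0 : E) 1).exists_forall_le' hcont.continuousOn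
    fun x hx => hpos x (ne_zero_of_mem_unit_sphere ⟨x, hx⟩)
  refine ⟨α, hα, fun x => ?_⟩
  rcases eq_or_ne x 0 with rfl | hx
  · simp [show q 0 = 0 by simpa using hq 0 0]
  rw [eq_sq_norm_mul_of_homogeneous hq hx, mul_comm]
  exact mul_le_mul_of_nonneg_left (hmin _ (by simp [norm_smul, hx])) (by positivity)

lemma exists_le_mul_sq_norm (hcont : Continuous q) (hq : ∀ (c : ℝ) x, q (c • x) = c ^ 2 * q x) :
    ∃ M, 0 < M ∧ ∀ x, q x ≤ M * ‖x‖ ^ 2 := by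
  obtain ⟨M, hM⟩ := (isCompact_sphere (0 : E) 1).bddAbove_image hcont.continuousOn
  refine ⟨max M 1, by positivity, fun x => ?_⟩
  rcases eq_or_ne x 0 with rfl | hx
  · simp [show q 0 = 0 by simpa using hq 0 0]
  rw [eq_sq_norm_mul_of_homogeneous hq hx, mul_comm _ (‖x‖ ^ 2)]
  refine mul_le_mul_of_nonneg_left ?_ (by positivity)
  exact (hM ⟨_, by simp [norm_smul, hx], rfl⟩).trans (le_max_left _ _)

end Homogeneous

section EuclideanBounds

variable {κ : Type*} [Fintype κ] {q : (κ → ℝ) → ℝ}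

lemma eNorm_nonneg (v : κ → ℝ) : 0 ≤ eNorm v :=
  Real.sqrt_nonneg _

lemma eNorm_eq_norm_toLp (v : κ → ℝ) : eNorm v = ‖(WithLp.toLp 2 v : EuclideanSpace ℝ κ)‖ := by
  simp [eNorm, EuclideanSpace.norm_eq]

lemma exists_pos_mul_sq_eNorm_le (hcont : Continuous q) (hq : ∀ (c : ℝ) v, q (c • v) = c ^ 2 * q v)
    (hpos : ∀ v, v ≠ 0 → 0 < q v) : ∃ α, 0 < α ∧ ∀ v, α * eNorm v ^ 2 ≤ q v := by
  obtain ⟨α, hα, h⟩ := exists_pos_mul_sq_norm_le (q := fun x : EuclideanSpace ℝ κ => q x.ofLp)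
    (hcont.comp (PiLp.continuous_ofLp 2 _)) (fun c x => hq c x.ofLp)
    (fun x hx => hpos _ (by simpa using hx))
  exact ⟨α, hα, fun v => by simpa [eNorm_eq_norm_toLp] using h (WithLp.toLp 2 v)⟩

lemma exists_le_mul_sq_eNorm (hcont : Continuous q) (hq : ∀ (c : ℝ) v, q (c • v) = c ^ 2 * q v) :
    ∃ M, 0 < M ∧ ∀ v, q v ≤ M * eNorm v ^ 2 := by
  obtain ⟨M, hM, h⟩ := exists_le_mul_sq_norm (q := fun x : EuclideanSpace ℝ κ => q x.ofLp)
    (hcont.comp (PiLp.continuous_ofLp 2 _)) (fun c x => hq c x.ofLp)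
  exact ⟨M, hM, fun v => by simpa [eNorm_eq_norm_toLp] using h (WithLp.toLp 2 v)⟩

end EuclideanBounds

section QuadNorm

variable {ι κ : Type*} [Fintype ι] [Fintype κ]

noncomputable def quadNorm (P : Matrix ι ι ℝ) (v : ι → ℝ) : ℝ :=
  √(v ⬝ᵥ (P *ᵥ v))

lemma continuous_dotProduct_mulVec (P : Matrix ι ι ℝ) :
    Continuous fun v : ι → ℝ => v ⬝ᵥ (P *ᵥ v) := by
  fun_prop

lemma smul_dotProduct_mulVec_smul (P : Matrix ι ι ℝ) (c : ℝ) (v : ι → ℝ) :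
    (c • v) ⬝ᵥ (P *ᵥ (c • v)) = c ^ 2 * (v ⬝ᵥ (P *ᵥ v)) := by
  simp only [mulVec_smul, smul_dotProduct, dotProduct_smul, smul_eq_mul]
  ring

lemma quadNorm_eq_norm {P : Matrix ι ι ℝ} (hP : P.PosSemidef) (v : ι → ℝ) :
    quadNorm P v = @Norm.norm _ (P.toSeminormedAddCommGroup hP).toNorm v := by
  rw [quadNorm, dotProduct_comm]
  rfl

lemma quadNorm_add_le {P : Matrix ι ι ℝ} (hP : P.PosSemidef) (v w : ι → ℝ) :
    quadNorm P (v + w) ≤ quadNorm P v + quadNorm P w := by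
  simpa only [quadNorm_eq_norm hP] using
    @norm_add_le _ (P.toSeminormedAddCommGroup hP).toSeminormedAddGroup v w

lemma exists_pos_mul_eNorm_le_quadNorm {P : Matrix ι ι ℝ} (hP : P.PosDef) :
    ∃ a, 0 < a ∧ ∀ v, a * eNorm v ≤ quadNorm P v := by
  obtain ⟨α, hα, h⟩ := exists_pos_mul_sq_eNorm_le (continuous_dotProduct_mulVec P)
    (smul_dotProduct_mulVec_smul P) fun v hv => by simpa using hP.dotProduct_mulVec_pos hv
  refine ⟨√α, Real.sqrt_pos.mpr hα, fun v => ?_⟩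
  rw [quadNorm, ← Real.sqrt_sq (eNorm_nonneg v), ← Real.sqrt_mul hα.le]
  exact Real.sqrt_le_sqrt (h v)

lemma exists_quadNorm_mulVec_le_mul_eNorm (P : Matrix ι ι ℝ) (G : Matrix ι κ ℝ) :
    ∃ c, 0 < c ∧ ∀ v, quadNorm P (G *ᵥ v) ≤ c * eNorm v := by
  obtain ⟨M, hM, h⟩ := exists_le_mul_sq_eNorm (q := fun v => (G *ᵥ v) ⬝ᵥ (P *ᵥ (G *ᵥ v)))
    ((continuous_dotProduct_mulVec P).comp (continuous_const.matrix_mulVec continuous_id))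
    fun c v => by rw [mulVec_smul, smul_dotProduct_mulVec_smul]
  refine ⟨√M, Real.sqrt_pos.mpr hM, fun v => ?_⟩
  rw [quadNorm, ← Real.sqrt_sq (eNorm_nonneg v), ← Real.sqrt_mul hM.le]
  exact Real.sqrt_le_sqrt (h v)

lemma exists_quadNorm_mulVec_le {P M : Matrix ι ι ℝ} (hP : P.PosSemidef)
    (hM : ∀ v : ι → ℝ, v ≠ 0 → v ⬝ᵥ ((Mᵀ * P * M - P) *ᵥ v) < 0) :
    ∃ ρ, 0 < ρ ∧ ρ < 1 ∧ ∀ v, quadNorm P (M *ᵥ v) ≤ ρ * quadNorm P v := by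
  have hconj (v : ι → ℝ) : (M *ᵥ v) ⬝ᵥ (P *ᵥ (M *ᵥ v)) = v ⬝ᵥ ((Mᵀ * P * M) *ᵥ v) := by
    rw [← mulVec_mulVec, ← mulVec_mulVec, dotProduct_mulVec v, vecMul_transpose]
  obtain ⟨α, hα, hdecay⟩ := exists_pos_mul_sq_eNorm_le
    (q := fun v => v ⬝ᵥ (P *ᵥ v) - (M *ᵥ v) ⬝ᵥ (P *ᵥ (M *ᵥ v)))
    (by fun_prop) (fun c v => by
      rw [mulVec_smul M, smul_dotProduct_mulVec_smul, smul_dotProduct_mulVec_smul, mul_sub])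
    fun v hv => by
      have := hM v hv
      rw [sub_mulVec, dotProduct_sub, ← hconj] at this
      exact sub_pos.mpr (sub_neg.mp this)
  obtain ⟨C, hC, hbound⟩ := exists_le_mul_sq_eNorm (continuous_dotProduct_mulVec P)
    (smul_dotProduct_mulVec_smul P)
  -- `P - MᵀPM ≥ α ‖·‖²` and `P ≤ C ‖·‖²` give `MᵀPM ≤ (1 - α / C) P`; the `max` keeps `ρ > 0`.
  set r := max (1 - α / C) (1 / 2)
  have hr : 0 < r := lt_max_of_lt_right one_half_pos
  have hr1 : r < 1 := max_lt (by linarith [div_pos hα hC]) one_half_lt_one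
  refine ⟨√r, Real.sqrt_pos.mpr hr, (Real.sqrt_lt' one_pos).mpr (by rwa [one_pow]), fun v => ?_⟩
  rw [quadNorm, quadNorm, ← Real.sqrt_mul hr.le]
  refine Real.sqrt_le_sqrt ?_
  have hQ := hP.dotProduct_mulVec_nonneg v
  simp only [star_trivial] at hQ
  have hscaled : α / C * (v ⬝ᵥ (P *ᵥ v)) ≤ α * eNorm v ^ 2 := by
    rw [div_mul_eq_mul_div, div_le_iff₀ hC]
    nlinarith [hbound v]
  nlinarith [hdecay v, le_max_left (1 - α / C) (1 / 2)]

lemma dotProduct_mulVec_le_of_decoupled {P : Matrix ι ι ℝ} (L : Finset ι)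
    (hoff : ∀ i ∈ L, ∀ j, j ≠ i → P i j = 0 ∧ P j i = 0) (hdiag : ∀ i ∈ L, 0 ≤ P i i)
    {a b : ι → ℝ} (hL : ∀ i ∈ L, a i ^ 2 ≤ b i ^ 2) (hcompl : ∀ i ∉ L, a i = b i) :
    a ⬝ᵥ (P *ᵥ a) ≤ b ⬝ᵥ (P *ᵥ b) := by
  -- Termwise: entries coupling `L` to the rest vanish, and the others only see `aᵢ² ≤ bᵢ²`
  -- or `aᵢ = bᵢ`.
  simp only [dotProduct, mulVec, Finset.mul_sum]
  refine Finset.sum_le_sum fun i _ => Finset.sum_le_sum fun j _ => ?_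
  by_cases hi : i ∈ L
  · rcases eq_or_ne j i with rfl | hji
    · nlinarith [hL j hi, hdiag j hi]
    · simp [(hoff i hi j hji).1]
  by_cases hj : j ∈ L
  · simp [(hoff j hj i fun h => hi (h ▸ hj)).2]
  · rw [hcompl i hi, hcompl j hj]

lemma sq_sub_le_of_abs_sub_le {g : ℝ → ℝ} {K : ℝ} (hg : ∀ a b, |g a - g b| ≤ K * |a - b|)
    (a b : ℝ) : (g a - g b) ^ 2 ≤ (K * (a - b)) ^ 2 :=
  sq_le_sq.mpr <| (hg a b).trans <| by
    rw [abs_mul]; exact mul_le_mul_of_nonneg_right (le_abs_self K) (abs_nonneg _)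

variable [DecidableEq ι]

lemma quadNorm_map_sub_le {P : Matrix ι ι ℝ} {L : Finset ι} {f : ι → ℝ → ℝ} {Lp : ι → ℝ}
    (hoff : ∀ i ∈ L, ∀ j, j ≠ i → P i j = 0 ∧ P j i = 0) (hdiag : ∀ i ∈ L, 0 ≤ P i i)
    (hLip : ∀ i ∈ L, ∀ a b, |f i a - f i b| ≤ Lp i * |a - b|)
    (hid : ∀ i ∉ L, f i = id ∧ Lp i = 1) (z₁ z₂ : ι → ℝ) :
    quadNorm P ((fun i => f i (z₁ i)) - fun i => f i (z₂ i)) ≤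
      quadNorm P (diagonal Lp *ᵥ (z₁ - z₂)) := by
  refine Real.sqrt_le_sqrt (dotProduct_mulVec_le_of_decoupled L hoff hdiag (fun i hi => ?_)
    fun i hi => ?_)
  · simpa [mulVec_diagonal] using sq_sub_le_of_abs_sub_le (hLip i hi) (z₁ i) (z₂ i)
  · simp [mulVec_diagonal, hid i hi]

end QuadNorm

lemma isKLFun_geometric {C ρ : ℝ} (hC : 0 < C) (hρ0 : 0 < ρ) (hρ1 : ρ < 1) :
    IsKLFun fun s k => C * ρ ^ k * s := by
  refine ⟨fun k => by fun_prop, fun k a _ b _ hab => mul_lt_mul_of_pos_left hab (by positivity),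
    fun k => mul_zero _, fun s hs k l hkl => ?_, fun s hs => ?_⟩
  · exact mul_lt_mul_of_pos_right
      (mul_lt_mul_of_pos_left (pow_lt_pow_right_of_lt_one₀ hρ0 hρ1 hkl) hC) hs
  · simpa using ((tendsto_pow_atTop_nhds_zero_of_lt_one hρ0.le hρ1).const_mul C).mul_const s

lemma isKInfFun_const_mul {C : ℝ} (hC : 0 < C) : IsKInfFun fun d => C * d :=
  ⟨⟨by fun_prop, fun _ _ _ _ hab => mul_lt_mul_of_pos_left hab hC, mul_zero C⟩,
    tendsto_id.const_mul_atTop hC⟩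

lemma traj_sub_le_of_step {σ υ : Type*} [Sub σ] [Sub υ] {F : σ → υ → σ} {V : σ → ℝ}
    {ν : υ → ℝ} {ρ c d : ℝ} (hρ0 : 0 ≤ ρ) (hρ1 : ρ < 1) (hc : 0 ≤ c) (hd : 0 ≤ d)
    (hstep : ∀ x₁ x₂ w₁ w₂, V (F x₁ w₁ - F x₂ w₂) ≤ ρ * V (x₁ - x₂) + c * ν (w₁ - w₂))
    {x₁ x₂ : σ} {u₁ u₂ : ℕ → υ} (hu : ∀ j, ν (u₁ j - u₂ j) ≤ d) (k : ℕ) :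
    V (traj F x₁ u₁ k - traj F x₂ u₂ k) ≤ ρ ^ k * V (x₁ - x₂) + c / (1 - ρ) * d := by
  have h1ρ : 0 < 1 - ρ := sub_pos.mpr hρ1
  induction k with
  | zero =>
    simpa [traj] using mul_nonneg (div_nonneg hc h1ρ.le) hd
  | succ k ih =>
    calc V (traj F x₁ u₁ (k + 1) - traj F x₂ u₂ (k + 1))
        ≤ ρ * V (traj F x₁ u₁ k - traj F x₂ u₂ k) + c * ν (u₁ k - u₂ k) := hstep _ _ _ _
      _ ≤ ρ * (ρ ^ k * V (x₁ - x₂) + c / (1 - ρ) * d) + c * d := by gcongr; exact hu k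
      _ = ρ ^ (k + 1) * V (x₁ - x₂) + c / (1 - ρ) * d := by field_simp; ring

theorem deltaISS_of_incremental_lyapunov {ι κ : Type*} [Fintype ι] [Fintype κ]
    {F : (ι → ℝ) → (κ → ℝ) → (ι → ℝ)} {V : (ι → ℝ) → ℝ} {a b c ρ : ℝ}
    (ha : 0 < a) (hb : 0 < b) (hc : 0 ≤ c) (hρ0 : 0 < ρ) (hρ1 : ρ < 1)
    (hlow : ∀ v, a * eNorm v ≤ V v) (hup : ∀ v, V v ≤ b * eNorm v)
    (hstep : ∀ x₁ x₂ w₁ w₂, V (F x₁ w₁ - F x₂ w₂) ≤ ρ * V (x₁ - x₂) + c * eNorm (w₁ - w₂)) :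
    DeltaISS F := by
  have hg : 0 ≤ c / (a * (1 - ρ)) := div_nonneg hc (mul_pos ha (sub_pos.mpr hρ1)).le
  refine ⟨fun s k => b / a * ρ ^ k * s, fun d => (c / (a * (1 - ρ)) + 1) * d,
    isKLFun_geometric (div_pos hb ha) hρ0 hρ1,
    isKInfFun_const_mul (add_pos_of_nonneg_of_pos hg one_pos),
    fun k x₁ x₂ d hd u₁ u₂ hu => le_of_mul_le_mul_left ?_ ha⟩
  have h1ρ : 1 - ρ ≠ 0 := (sub_pos.mpr hρ1).ne'
  calc a * eNorm (traj F x₁ u₁ k - traj F x₂ u₂ k)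
      ≤ ρ ^ k * V (x₁ - x₂) + c / (1 - ρ) * d :=
        (hlow _).trans (traj_sub_le_of_step hρ0.le hρ1 hc hd hstep hu k)
    _ ≤ ρ ^ k * (b * eNorm (x₁ - x₂)) + c / (1 - ρ) * d + a * d := by
        linarith [mul_le_mul_of_nonneg_left (hup (x₁ - x₂)) (pow_pos hρ0 k).le,
          mul_nonneg ha.le hd]
    _ = a * (b / a * ρ ^ k * eNorm (x₁ - x₂) + (c / (a * (1 - ρ)) + 1) * d) := by
        field_simp
        ring

/-- **Theorem 2 of the paper.** If there exists a symmetric positive definite `P`, with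
`P i j = P j i = 0` for every nonlinear coordinate `i ∈ L` and every `j ≠ i`, such that
`Ãᵀ P Ã - P ≺ 0` where `Ã = W A` and `W = diag(L_{p1},…,L_{pn})`, then the system
`x(k+1) = f(A x(k) + B u(k))` is incrementally input-to-state stable. -/
theorem deltaISS_of_structured_lyapunov
    (n m : ℕ) (L : Finset (Fin n)) (f : Fin n → ℝ → ℝ) (Lp : Fin n → ℝ)
    (hLip : ∀ i ∈ L, 0 < Lp i ∧ ∀ a b : ℝ, |f i a - f i b| ≤ Lp i * |a - b|)
    (hid : ∀ i ∉ L, f i = id ∧ Lp i = 1)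
    (A : Matrix (Fin n) (Fin n) ℝ) (B : Matrix (Fin n) (Fin m) ℝ)
    (P : Matrix (Fin n) (Fin n) ℝ)
    (hPsym : Pᵀ = P)
    (hPpos : ∀ v : Fin n → ℝ, v ≠ 0 → 0 < v ⬝ᵥ (P *ᵥ v))
    (hPstruct : ∀ i ∈ L, ∀ j : Fin n, j ≠ i → P i j = 0 ∧ P j i = 0)
    (hNeg : ∀ v : Fin n → ℝ, v ≠ 0 →
      v ⬝ᵥ (((Matrix.diagonal Lp * A)ᵀ * P * (Matrix.diagonal Lp * A) - P) *ᵥ v) < 0) :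
    DeltaISS (fun x u => fun i => f i ((A *ᵥ x + B *ᵥ u) i)) := by
  have hP : P.PosDef := .of_dotProduct_mulVec_pos
    (by rwa [IsHermitian, conjTranspose_eq_transpose_of_trivial]) (by simpa using hPpos)
  obtain ⟨a, ha, hlow⟩ := exists_pos_mul_eNorm_le_quadNorm hP
  obtain ⟨b, hb, hup⟩ := exists_quadNorm_mulVec_le_mul_eNorm P (1 : Matrix (Fin n) (Fin n) ℝ)
  obtain ⟨c, hc, hinput⟩ := exists_quadNorm_mulVec_le_mul_eNorm P (diagonal Lp * B)
  obtain ⟨ρ, hρ0, hρ1, hcontr⟩ := exists_quadNorm_mulVec_le hP.posSemidef hNeg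
  refine deltaISS_of_incremental_lyapunov ha hb hc.le hρ0 hρ1 hlow (by simpa using hup)
    fun x₁ x₂ w₁ w₂ => ?_
  calc quadNorm P ((fun i => f i ((A *ᵥ x₁ + B *ᵥ w₁) i)) - fun i => f i ((A *ᵥ x₂ + B *ᵥ w₂) i))
      ≤ quadNorm P (diagonal Lp *ᵥ ((A *ᵥ x₁ + B *ᵥ w₁) - (A *ᵥ x₂ + B *ᵥ w₂))) :=
        quadNorm_map_sub_le hPstruct (fun i _ => hP.posSemidef.diag_nonneg)
          (fun i hi => (hLip i hi).2) hid _ _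
    _ = quadNorm P ((diagonal Lp * A) *ᵥ (x₁ - x₂) + (diagonal Lp * B) *ᵥ (w₁ - w₂)) := by
        simp only [mulVec_add, mulVec_sub, ← mulVec_mulVec]
        abel_nf
    _ ≤ ρ * quadNorm P (x₁ - x₂) + c * eNorm (w₁ - w₂) :=
        (quadNorm_add_le hP.posSemidef _ _).trans (add_le_add (hcontr _) (hinput _))
end

section
/- Let n ∈ ℕ, let L ⊆ {1,…,n}, and for each i let f_i : ℝ → ℝ be globally Lipschitz with constant L_{pi} > 0 (|f_i(a) − f_i(b)| ≤ L_{pi}|a − b| for all a,b) when i ∈ L, and f_i = id with L_{pi} = 1 when i ∉ L. Let W = diag(L_{p1},…,L_{pn}), and let P ∈ ℝ^{n×n} be symmetric positive definite with P_{ij} = P_{ji} = 0 for every i ∈ L and every j ≠ i. Then for all v1, v2 ∈ ℝ^n, setting q = W v1 + f(v1) − W v2 − f(v2) and r = f(v1) − W v1 − f(v2) + W v2 (with f applied componentwise), one has q^T P r ≤ 0. -/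
open Matrix

/-- **Key cross-term inequality** in the proof of the paper's main δISS theorem:
for `W = diag(L_{p1},…,L_{pn})` and a structured symmetric positive definite `P`,
with `q = W v1 + f(v1) - W v2 - f(v2)` and `r = f(v1) - W v1 - f(v2) + W v2`,
one has `qᵀ P r ≤ 0`. -/
theorem cross_term_nonpos
    (n : ℕ) (L : Finset (Fin n)) (f : Fin n → ℝ → ℝ) (Lp : Fin n → ℝ)
    (hLip : ∀ i ∈ L, 0 < Lp i ∧ ∀ a b : ℝ, |f i a - f i b| ≤ Lp i * |a - b|)
    (hid : ∀ i ∉ L, f i = id ∧ Lp i = 1)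
    (P : Matrix (Fin n) (Fin n) ℝ)
    (hPsym : Pᵀ = P)
    (hPpos : ∀ v : Fin n → ℝ, v ≠ 0 → 0 < v ⬝ᵥ (P *ᵥ v))
    (hPstruct : ∀ i ∈ L, ∀ j : Fin n, j ≠ i → P i j = 0 ∧ P j i = 0)
    (v1 v2 : Fin n → ℝ) :
    ((Matrix.diagonal Lp *ᵥ v1) + (fun i => f i (v1 i))
        - (Matrix.diagonal Lp *ᵥ v2) - (fun i => f i (v2 i)))
      ⬝ᵥ (P *ᵥ ((fun i => f i (v1 i)) - (Matrix.diagonal Lp *ᵥ v1)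
        - (fun i => f i (v2 i)) + (Matrix.diagonal Lp *ᵥ v2))) ≤ 0 := by
  set q : Fin n → ℝ := (Matrix.diagonal Lp *ᵥ v1) + (fun i => f i (v1 i))
        - (Matrix.diagonal Lp *ᵥ v2) - (fun i => f i (v2 i)) with hq
  set r : Fin n → ℝ := (fun i => f i (v1 i)) - (Matrix.diagonal Lp *ᵥ v1)
        - (fun i => f i (v2 i)) + (Matrix.diagonal Lp *ᵥ v2) with hr
  have hqi : ∀ i, q i = Lp i * v1 i + f i (v1 i) - Lp i * v2 i - f i (v2 i) := by
    intro i; simp [hq, mulVec_diagonal]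
  have hri : ∀ i, r i = f i (v1 i) - Lp i * v1 i - f i (v2 i) + Lp i * v2 i := by
    intro i; simp [hr, mulVec_diagonal]
  -- r vanishes off L
  have hr0 : ∀ i ∉ L, r i = 0 := by
    intro i hi
    obtain ⟨hf, hLp⟩ := hid i hi
    rw [hri, hf, hLp]; simp
  rw [dotProduct]
  apply Finset.sum_nonpos
  intro i _
  by_cases hi : i ∈ L
  · -- (P *ᵥ r) i = P i i * r i
    have hPr : (P *ᵥ r) i = P i i * r i := by
      rw [mulVec, dotProduct]
      rw [Finset.sum_eq_single i]
      · intro j _ hj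
        rw [(hPstruct i hi j hj).1, zero_mul]
      · intro h; exact absurd (Finset.mem_univ i) h
    rw [hPr]
    have hqr : q i * r i ≤ 0 := by
      rw [hqi, hri]
      have : (Lp i * v1 i + f i (v1 i) - Lp i * v2 i - f i (v2 i)) *
          (f i (v1 i) - Lp i * v1 i - f i (v2 i) + Lp i * v2 i)
          = (f i (v1 i) - f i (v2 i))^2 - (Lp i * (v1 i - v2 i))^2 := by ring
      rw [this]
      have h1 := (hLip i hi).2 (v1 i) (v2 i)
      have h2 : |f i (v1 i) - f i (v2 i)| ≤ |Lp i * (v1 i - v2 i)| := by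
        rwa [abs_mul, abs_of_pos (hLip i hi).1]
      nlinarith [sq_abs (f i (v1 i) - f i (v2 i)), sq_abs (Lp i * (v1 i - v2 i)),
        abs_nonneg (f i (v1 i) - f i (v2 i)), abs_nonneg (Lp i * (v1 i - v2 i))]
    have hPii : 0 < P i i := by
      have := hPpos (Pi.single i 1) (by
        intro h
        have := congrFun h i
        simp at this)
      have heq : (Pi.single i 1 : Fin n → ℝ) ⬝ᵥ (P *ᵥ Pi.single i 1) = P i i := by
        rw [mulVec_single]
        simp [dotProduct, Pi.single_apply]
      linarith [heq ▸ this]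
    nlinarith
  · have hPr : (P *ᵥ r) i = 0 := by
      rw [mulVec, dotProduct]
      apply Finset.sum_eq_zero
      intro j _
      by_cases hj : j ∈ L
      · have hne : i ≠ j := fun h => hi (h ▸ hj)
        rw [(hPstruct j hj i hne).2, zero_mul]
      · rw [hr0 j hj, mul_zero]
    rw [hPr, mul_zero]
end

section
/- Let F : ℝ^n × ℝ^m → ℝ^n define the discrete-time system x(k+1) = F(x(k), u(k)). Suppose there exist a function V : ℝ^n × ℝ^n → ℝ≥0, functions ξ1, ξ2, ξ : ℝ≥0 → ℝ≥0 of class K∞ (continuous, strictly increasing, vanishing at 0, and tending to ∞) and a function σ : ℝ≥0 → ℝ≥0 of class K (continuous, strictly increasing, vanishing at 0) such that for all x1, x2 ∈ ℝ^n and u1, u2 ∈ ℝ^m: (i) ξ1(‖x1 − x2‖) ≤ V(x1, x2) ≤ ξ2(‖x1 − x2‖), and (ii) V(F(x1, u1), F(x2, u2)) − V(x1, x2) ≤ −ξ(‖x1 − x2‖) + σ(‖u1 − u2‖). Then the system is incrementally input-to-state stable (δISS). -/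
open Matrix Filter

/-!
Along two trajectories driven by inputs at distance at most `d`, the numbers
`W j = V (x₁ j) (x₂ j)` satisfy `W (j+1) ≤ W j - α (W j) + σ d` with `α = ξ ∘ ξ₂⁻¹`, since
`ξ₂⁻¹ (W j) ≤ ‖x₁ j - x₂ j‖`. Above the level `b = ξ₂ (ξ⁻¹ (2 σ d))` we have `α (W j) ≥ 2 σ d`, so
`W (j+1) ≤ W j - α (W j) / 2 ≤ g (W j)` for a continuous nondecreasing `g` with `g v < v` for
`v > 0`; its iterates tend to `0`, because their limit is a fixed point. Below `b` the value of `W`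
grows by at most `σ d`, and it never climbs back above `b + σ d`. Hence
`W k ≤ max (g^[k] (W 0)) (b + σ d)`, and applying `ξ₁⁻¹` gives the δISS estimate, with `s / (k + 1)`
added to make `β` strictly monotone in both arguments.
-/

open Topology
open scoped NNReal

namespace IsKFun

variable {f g : ℝ → ℝ}

lemma monotoneOn (hf : IsKFun f) : MonotoneOn f (Set.Ici 0) := hf.2.1.monotoneOn

lemma nonneg (hf : IsKFun f) {x : ℝ} (hx : 0 ≤ x) : 0 ≤ f x :=
  hf.2.2 ▸ hf.monotoneOn Set.self_mem_Ici hx hx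

lemma pos (hf : IsKFun f) {x : ℝ} (hx : 0 < x) : 0 < f x :=
  hf.2.2 ▸ hf.2.1 Set.self_mem_Ici hx.le hx

lemma comp (hf : IsKFun f) (hg : IsKFun g) : IsKFun (f ∘ g) :=
  have hmaps : Set.MapsTo g (Set.Ici 0) (Set.Ici 0) := fun _ hx => hg.nonneg hx
  ⟨hf.1.comp hg.1 hmaps, hf.2.1.comp hg.2.1 hmaps, by simp [hg.2.2, hf.2.2]⟩

lemma add (hf : IsKFun f) (hg : IsKFun g) : IsKFun (f + g) :=
  ⟨hf.1.add hg.1, fun _ hx _ hy hxy => add_lt_add (hf.2.1 hx hy hxy) (hg.2.1 hx hy hxy),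
    by simp [hf.2.2, hg.2.2]⟩

lemma const_mul (hf : IsKFun f) {c : ℝ} (hc : 0 < c) : IsKFun (fun x => c * f x) :=
  ⟨continuousOn_const.mul hf.1, fun _ hx _ hy hxy => mul_lt_mul_of_pos_left (hf.2.1 hx hy hxy) hc,
    by simp [hf.2.2]⟩

lemma isKInfFun_add_id (hf : IsKFun f) : IsKInfFun (f + id) :=
  ⟨hf.add ⟨continuousOn_id, strictMono_id.strictMonoOn _, rfl⟩,
    tendsto_atTop_mono' _ ((eventually_ge_atTop 0).mono fun _ hx => le_add_of_nonneg_left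
      (hf.nonneg hx)) tendsto_id⟩

def toNNReal (hf : IsKFun f) (x : ℝ≥0) : ℝ≥0 := ⟨f x, hf.nonneg x.2⟩

lemma strictMono_toNNReal (hf : IsKFun f) : StrictMono hf.toNNReal :=
  fun a b hab => hf.2.1 a.2 b.2 hab

end IsKFun

namespace IsKInfFun

variable {f : ℝ → ℝ}

lemma surjective_toNNReal (hf : IsKInfFun f) : Function.Surjective hf.1.toNNReal := by
  intro y
  obtain ⟨M, hyM, hM⟩ := ((tendsto_atTop.mp hf.2 y).and (eventually_ge_atTop 0)).exists
  obtain ⟨x, hx, hfx⟩ := intermediate_value_Icc hM (hf.1.1.mono Set.Icc_subset_Ici_self)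
    ⟨by rw [hf.1.2.2]; exact y.2, hyM⟩
  exact ⟨⟨x, hx.1⟩, Subtype.ext hfx⟩

noncomputable def toOrderIso (hf : IsKInfFun f) : ℝ≥0 ≃o ℝ≥0 :=
  StrictMono.orderIsoOfSurjective _ hf.1.strictMono_toNNReal hf.surjective_toNNReal

/-- The inverse of `f` on `[0, ∞)`, extended by `0` to negative arguments. -/
noncomputable def inv (hf : IsKInfFun f) (y : ℝ) : ℝ := hf.toOrderIso.symm y.toNNReal

lemma inv_nonneg (hf : IsKInfFun f) (y : ℝ) : 0 ≤ hf.inv y := (hf.toOrderIso.symm _).2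

lemma continuous_inv (hf : IsKInfFun f) : Continuous hf.inv :=
  continuous_subtype_val.comp (hf.toOrderIso.symm.continuous.comp continuous_real_toNNReal)

lemma monotone_inv (hf : IsKInfFun f) : Monotone hf.inv :=
  fun _ _ hab => NNReal.coe_le_coe.2 (hf.toOrderIso.symm.monotone (Real.toNNReal_mono hab))

lemma inv_apply (hf : IsKInfFun f) {x : ℝ} (hx : 0 ≤ x) : hf.inv (f x) = x := by
  have : (f x).toNNReal = hf.toOrderIso (⟨x, hx⟩ : ℝ≥0) :=
    Subtype.ext (Real.coe_toNNReal _ (hf.1.nonneg hx))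
  rw [inv, this]
  exact congrArg Subtype.val (hf.toOrderIso.symm_apply_apply _)

lemma apply_inv (hf : IsKInfFun f) {y : ℝ} (hy : 0 ≤ y) : f (hf.inv y) = y :=
  congrArg Subtype.val (hf.toOrderIso.apply_symm_apply y.toNNReal) |>.trans (Real.coe_toNNReal _ hy)

lemma isKFun_inv (hf : IsKInfFun f) : IsKFun hf.inv := by
  refine ⟨hf.continuous_inv.continuousOn, fun a ha b hb hab => ?_, ?_⟩
  · exact NNReal.coe_lt_coe.2 (hf.toOrderIso.symm.strictMono
      ((Real.toNNReal_lt_toNNReal_iff_of_nonneg ha).2 hab))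
  · simpa [hf.1.2.2] using hf.inv_apply le_rfl

end IsKInfFun

lemma tendsto_iterate_nhds_zero {g : ℝ → ℝ} (hg : Continuous g)
    (hmaps : Set.MapsTo g (Set.Ici 0) (Set.Ici 0)) (hle : ∀ v, 0 ≤ v → g v ≤ v)
    (hlt : ∀ v, 0 < v → g v < v) {v : ℝ} (hv : 0 ≤ v) :
    Tendsto (fun k => g^[k] v) atTop (𝓝 0) := by
  have hmem : ∀ k, 0 ≤ g^[k] v := fun k => hmaps.iterate k hv
  have hanti : Antitone (fun k => g^[k] v) := antitone_nat_of_succ_le fun k => by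
    rw [Function.iterate_succ_apply']
    exact hle _ (hmem k)
  have hlim := tendsto_atTop_ciInf hanti ⟨0, by rintro _ ⟨k, rfl⟩; exact hmem k⟩
  have hfix : g (⨅ k, g^[k] v) = ⨅ k, g^[k] v := isFixedPt_of_tendsto_iterate hlim hg.continuousAt
  have hzero : ⨅ k, g^[k] v = 0 := by
    by_contra hne
    exact (hlt _ ((le_ciInf hmem).lt_of_ne' hne)).ne hfix
  rwa [hzero] at hlim

section LipschitzEnvelope

variable {α : ℝ → ℝ} {v : ℝ}

noncomputable def lipschitzEnvelope (α : ℝ → ℝ) (v : ℝ) : ℝ :=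
  sInf ((fun w => α w + |v - w|) '' Set.Ici 0)

lemma lipschitzEnvelope_nonneg (hα : ∀ w, 0 ≤ w → 0 ≤ α w) (v : ℝ) :
    0 ≤ lipschitzEnvelope α v :=
  le_csInf (Set.nonempty_Ici.image _) <| Set.forall_mem_image.2 fun w hw =>
    add_nonneg (hα w hw) (abs_nonneg _)

lemma bddBelow_lipschitzEnvelope_set (hα : ∀ w, 0 ≤ w → 0 ≤ α w) (v : ℝ) :
    BddBelow ((fun w => α w + |v - w|) '' Set.Ici 0) :=
  ⟨0, Set.forall_mem_image.2 fun w hw => add_nonneg (hα w hw) (abs_nonneg _)⟩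

lemma lipschitzEnvelope_le (hα : ∀ w, 0 ≤ w → 0 ≤ α w) (hv : 0 ≤ v) :
    lipschitzEnvelope α v ≤ α v := by
  simpa [lipschitzEnvelope] using
    csInf_le (bddBelow_lipschitzEnvelope_set hα v) (Set.mem_image_of_mem _ hv)

lemma lipschitzEnvelope_le_add_abs (hα : ∀ w, 0 ≤ w → 0 ≤ α w) (x y : ℝ) :
    lipschitzEnvelope α x ≤ lipschitzEnvelope α y + |x - y| := by
  rw [← sub_le_iff_le_add]
  refine le_csInf (Set.nonempty_Ici.image _) (Set.forall_mem_image.2 fun w hw => ?_)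
  have hx := csInf_le (bddBelow_lipschitzEnvelope_set hα x) (Set.mem_image_of_mem _ hw)
  have htri : |x - w| ≤ |y - w| + |x - y| := by
    simpa using abs_add_le (y - w) (x - y)
  simp only [lipschitzEnvelope] at hx ⊢
  linarith

lemma lipschitzWith_lipschitzEnvelope (hα : ∀ w, 0 ≤ w → 0 ≤ α w) :
    LipschitzWith 1 (lipschitzEnvelope α) :=
  LipschitzWith.of_le_add fun x y => by
    simpa only [Real.dist_eq] using lipschitzEnvelope_le_add_abs hα x y

lemma lipschitzEnvelope_le_self (hα : ∀ w, 0 ≤ w → 0 ≤ α w) (hα0 : α 0 = 0) (hv : 0 ≤ v) :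
    lipschitzEnvelope α v ≤ v := by
  have h0 : lipschitzEnvelope α 0 ≤ 0 := by simpa [hα0] using lipschitzEnvelope_le hα le_rfl
  have := lipschitzEnvelope_le_add_abs hα v 0
  rw [sub_zero, abs_of_nonneg hv] at this
  linarith

lemma min_le_lipschitzEnvelope (hα : ∀ w, 0 ≤ w → 0 ≤ α w)
    (hmono : MonotoneOn α (Set.Ici 0)) (hv : 0 ≤ v) :
    min (v / 2) (α (v / 2)) ≤ lipschitzEnvelope α v := by
  refine le_csInf (Set.nonempty_Ici.image _) (Set.forall_mem_image.2 fun w (hw : 0 ≤ w) => ?_)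
  rcases le_or_gt w (v / 2) with hwv | hwv
  · have : v / 2 ≤ |v - w| := by rw [abs_of_nonneg (by linarith)]; linarith
    linarith [min_le_left (v / 2) (α (v / 2)), hα w hw]
  · have : α (v / 2) ≤ α w := hmono (by simp; linarith) hw hwv.le
    linarith [min_le_right (v / 2) (α (v / 2)), abs_nonneg (v - w)]

end LipschitzEnvelope

section ComparisonFun

variable {α : ℝ → ℝ} {v : ℝ}

/-- Subtracting half of a `1`-Lipschitz minorant of `α`, rather than of `α` itself, is what makes
this map nondecreasing. -/
noncomputable def comparisonFun (α : ℝ → ℝ) (v : ℝ) : ℝ := v - lipschitzEnvelope α v / 2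

lemma monotone_comparisonFun (hα : IsKFun α) : Monotone (comparisonFun α) := fun a b hab => by
  have := lipschitzEnvelope_le_add_abs (fun _ => hα.nonneg) b a
  rw [abs_of_nonneg (sub_nonneg.2 hab)] at this
  simp only [comparisonFun]
  linarith

lemma continuous_comparisonFun (hα : IsKFun α) : Continuous (comparisonFun α) :=
  continuous_id.sub ((lipschitzWith_lipschitzEnvelope fun _ => hα.nonneg).continuous.div_const 2)

lemma comparisonFun_zero (hα : IsKFun α) : comparisonFun α 0 = 0 := by
  have := lipschitzEnvelope_le_self (fun _ => hα.nonneg) hα.2.2 le_rfl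
  have := lipschitzEnvelope_nonneg (fun _ => hα.nonneg) 0
  simp only [comparisonFun]
  linarith

lemma comparisonFun_nonneg (hα : IsKFun α) (hv : 0 ≤ v) : 0 ≤ comparisonFun α v := by
  have := lipschitzEnvelope_le_self (fun _ => hα.nonneg) hα.2.2 hv
  simp only [comparisonFun]
  linarith

lemma comparisonFun_le (hα : IsKFun α) (v : ℝ) : comparisonFun α v ≤ v := by
  have := lipschitzEnvelope_nonneg (fun _ => hα.nonneg) v
  simp only [comparisonFun]
  linarith

lemma comparisonFun_lt (hα : IsKFun α) (hv : 0 < v) : comparisonFun α v < v := by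
  have := min_le_lipschitzEnvelope (fun _ => hα.nonneg) hα.monotoneOn hv.le
  have := lt_min (half_pos hv) (hα.pos (half_pos hv))
  simp only [comparisonFun]
  linarith

lemma sub_half_le_comparisonFun (hα : IsKFun α) (hv : 0 ≤ v) :
    v - α v / 2 ≤ comparisonFun α v := by
  have := lipschitzEnvelope_le (fun _ => hα.nonneg) hv
  simp only [comparisonFun]
  linarith

lemma mapsTo_comparisonFun (hα : IsKFun α) :
    Set.MapsTo (comparisonFun α) (Set.Ici 0) (Set.Ici 0) :=
  fun _ => comparisonFun_nonneg hα

lemma tendsto_iterate_comparisonFun (hα : IsKFun α) (hv : 0 ≤ v) :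
    Tendsto (fun k => (comparisonFun α)^[k] v) atTop (𝓝 0) :=
  tendsto_iterate_nhds_zero (continuous_comparisonFun hα) (mapsTo_comparisonFun hα)
    (fun v _ => comparisonFun_le hα v) (fun _ => comparisonFun_lt hα) hv

end ComparisonFun

lemma isKLFun_add_div_succ {φ : ℝ → ℕ → ℝ}
    (hcont : ∀ k, ContinuousOn (fun s => φ s k) (Set.Ici 0))
    (hmono : ∀ k, MonotoneOn (fun s => φ s k) (Set.Ici 0)) (hzero : ∀ k, φ 0 k = 0)
    (hanti : ∀ s, 0 < s → Antitone (φ s)) (hlim : ∀ s, 0 < s → Tendsto (φ s) atTop (𝓝 0)) :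
    IsKLFun (fun s k => φ s k + s / (k + 1)) := by
  refine ⟨fun k => (hcont k).add (continuous_id.div_const _).continuousOn,
    fun k a ha b hb hab => add_lt_add_of_le_of_lt (hmono k ha hb hab.le)
      (div_lt_div_of_pos_right hab (by positivity)),
    fun k => by simp [hzero],
    fun s hs => strictAnti_nat_of_succ_lt fun k => add_lt_add_of_le_of_lt (hanti s hs k.le_succ)
      (div_lt_div_of_pos_left hs (by positivity) (by push_cast; linarith)),
    fun s hs => ?_⟩
  simpa [div_eq_mul_inv] using (hlim s hs).add (tendsto_one_div_add_atTop_nhds_zero_nat.const_mul s)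

lemma isKLFun_comparison {p q α : ℝ → ℝ} (hp : IsKFun p) (hq : IsKFun q) (hα : IsKFun α) :
    IsKLFun (fun s k => p ((comparisonFun α)^[k] (q s)) + s / (k + 1)) := by
  have hmaps : ∀ k, Set.MapsTo (fun s => (comparisonFun α)^[k] (q s)) (Set.Ici 0) (Set.Ici 0) :=
    fun k _ hs => (mapsTo_comparisonFun hα).iterate k (hq.nonneg hs)
  refine isKLFun_add_div_succ
    (fun k => hp.1.comp (((continuous_comparisonFun hα).iterate k).comp_continuousOn hq.1)
      (hmaps k))
    (fun k a ha b hb hab => hp.monotoneOn (hmaps k ha) (hmaps k hb)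
      ((monotone_comparisonFun hα).iterate k (hq.monotoneOn ha hb hab)))
    (fun k => by simp [hq.2.2, Function.iterate_fixed (comparisonFun_zero hα), hp.2.2])
    (fun s hs => antitone_nat_of_succ_le fun k => hp.monotoneOn (hmaps (k + 1) hs.le)
      (hmaps k hs.le) ?_)
    (fun s hs => ?_)
  · exact (Function.iterate_succ_apply' _ k _).trans_le (comparisonFun_le hα _)
  · have hiter := tendsto_nhdsWithin_iff.2
      ⟨tendsto_iterate_comparisonFun hα (hq.nonneg hs.le),
        Eventually.of_forall fun k => hmaps k hs.le⟩
    simpa [hp.2.2, Function.comp_def] using (hp.1 0 Set.self_mem_Ici).tendsto.comp hiter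

lemma le_max_iterate_of_le_sub_add {α g : ℝ → ℝ} {W : ℕ → ℝ} {b c : ℝ}
    (hα_nonneg : ∀ v, 0 ≤ v → 0 ≤ α v) (hαmono : MonotoneOn α (Set.Ici 0)) (hg : Monotone g)
    (hgα : ∀ v, 0 ≤ v → v - α v / 2 ≤ g v) (hb : 0 ≤ b) (hc : 0 ≤ c) (hαb : 2 * c ≤ α b)
    (hW : ∀ j, 0 ≤ W j) (hstep : ∀ j, W (j + 1) ≤ W j - α (W j) + c) (k : ℕ) :
    W k ≤ max (g^[k] (W 0)) (b + c) := by
  induction k with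
  | zero => exact le_max_left _ _
  | succ k ih =>
    have hstepk := hstep k
    rcases le_or_gt (W k) (b + c) with hWk | hWk
    · refine le_max_of_le_right ?_
      rcases le_or_gt (W k) b with hWb | hWb
      · linarith [hα_nonneg _ (hW k)]
      · linarith [hαmono hb (hW k) hWb.le]
    · refine le_max_of_le_left ?_
      have hαW : α b ≤ α (W k) := hαmono hb (hW k) (by linarith)
      calc W (k + 1) ≤ W k - α (W k) / 2 := by linarith
        _ ≤ g (W k) := hgα _ (hW k)
        _ ≤ g (g^[k] (W 0)) := hg ((le_max_iff.1 ih).resolve_right hWk.not_ge)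
        _ = g^[k + 1] (W 0) := (Function.iterate_succ_apply' g k _).symm

lemma eNorm_nonneg_s3 {ι : Type*} [Fintype ι] (v : ι → ℝ) : 0 ≤ eNorm v := Real.sqrt_nonneg _

lemma le_sub_comp_inv_add_of_dissipation {ι κ : Type*} [Fintype ι] [Fintype κ]
    {F : (ι → ℝ) → (κ → ℝ) → (ι → ℝ)} {V : (ι → ℝ) → (ι → ℝ) → ℝ} {ξ2 ξ σ : ℝ → ℝ}
    (hξ2 : IsKInfFun ξ2) (hξ : IsKFun ξ) (hσ : IsKFun σ)
    (hV : ∀ x1 x2, V x1 x2 ≤ ξ2 (eNorm (x1 - x2)))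
    (hdecr : ∀ x1 x2 u1 u2,
      V (F x1 u1) (F x2 u2) - V x1 x2 ≤ - ξ (eNorm (x1 - x2)) + σ (eNorm (u1 - u2)))
    {x1 x2 : ι → ℝ} {u1 u2 : κ → ℝ} {d : ℝ} (hu : eNorm (u1 - u2) ≤ d) :
    V (F x1 u1) (F x2 u2) ≤ V x1 x2 - (ξ ∘ hξ2.inv) (V x1 x2) + σ d := by
  have hinv : hξ2.inv (V x1 x2) ≤ eNorm (x1 - x2) := by
    simpa [hξ2.inv_apply (eNorm_nonneg_s3 _)] using hξ2.monotone_inv (hV x1 x2)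
  have hξle := hξ.monotoneOn (hξ2.inv_nonneg _) (eNorm_nonneg_s3 _) hinv
  have hσle := hσ.monotoneOn (eNorm_nonneg_s3 _) ((eNorm_nonneg_s3 _).trans hu) hu
  simp only [Function.comp_apply]
  linarith [hdecr x1 x2 u1 u2]

lemma dissipation_le_max_iterate {ι κ : Type*} [Fintype ι] [Fintype κ]
    {F : (ι → ℝ) → (κ → ℝ) → (ι → ℝ)} {V : (ι → ℝ) → (ι → ℝ) → ℝ} {ξ2 ξ σ : ℝ → ℝ}
    (hξ2 : IsKInfFun ξ2) (hξ : IsKInfFun ξ) (hσ : IsKFun σ) (hV0 : ∀ x1 x2, 0 ≤ V x1 x2)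
    (hV : ∀ x1 x2, V x1 x2 ≤ ξ2 (eNorm (x1 - x2)))
    (hdecr : ∀ x1 x2 u1 u2,
      V (F x1 u1) (F x2 u2) - V x1 x2 ≤ - ξ (eNorm (x1 - x2)) + σ (eNorm (u1 - u2)))
    (x01 x02 : ι → ℝ) {u1 u2 : ℕ → κ → ℝ} {d : ℝ} (hd : 0 ≤ d)
    (hu : ∀ j, eNorm (u1 j - u2 j) ≤ d) (k : ℕ) :
    V (traj F x01 u1 k) (traj F x02 u2 k) ≤
      max ((comparisonFun (ξ ∘ hξ2.inv))^[k] (V x01 x02)) (ξ2 (hξ.inv (2 * σ d)) + σ d) := by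
  have hα : IsKFun (ξ ∘ hξ2.inv) := hξ.1.comp hξ2.isKFun_inv
  have hαb : 2 * σ d ≤ (ξ ∘ hξ2.inv) (ξ2 (hξ.inv (2 * σ d))) := by
    simp [hξ2.inv_apply (hξ.inv_nonneg _), hξ.apply_inv (mul_nonneg zero_le_two (hσ.nonneg hd))]
  exact le_max_iterate_of_le_sub_add (fun _ => hα.nonneg) hα.monotoneOn
    (monotone_comparisonFun hα) (fun _ => sub_half_le_comparisonFun hα)
    (hξ2.1.nonneg (hξ.inv_nonneg _)) (hσ.nonneg hd) hαb (fun _ => hV0 _ _)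
    (fun j => le_sub_comp_inv_add_of_dissipation hξ2 hξ.1 hσ hV hdecr (hu j)) k

theorem deltaISS_of_dissipation_lyapunov_general
    (n m : ℕ) (F : (Fin n → ℝ) → (Fin m → ℝ) → (Fin n → ℝ))
    (V : (Fin n → ℝ) → (Fin n → ℝ) → ℝ)
    (ξ1 ξ2 ξ σ : ℝ → ℝ)
    (hξ1 : IsKInfFun ξ1) (hξ2 : IsKInfFun ξ2) (hξ : IsKInfFun ξ) (hσ : IsKFun σ)
    (hsandwich : ∀ x1 x2 : Fin n → ℝ,
      ξ1 (eNorm (x1 - x2)) ≤ V x1 x2 ∧ V x1 x2 ≤ ξ2 (eNorm (x1 - x2)))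
    (hdecr : ∀ (x1 x2 : Fin n → ℝ) (u1 u2 : Fin m → ℝ),
      V (F x1 u1) (F x2 u2) - V x1 x2 ≤ - ξ (eNorm (x1 - x2)) + σ (eNorm (u1 - u2))) :
    DeltaISS F := by
  have hα : IsKFun (ξ ∘ hξ2.inv) := hξ.1.comp hξ2.isKFun_inv
  set g := comparisonFun (ξ ∘ hξ2.inv)
  set b : ℝ → ℝ := fun d => ξ2 (hξ.inv (2 * σ d)) + σ d
  refine ⟨fun s k => hξ1.inv (g^[k] (ξ2 s)) + s / (k + 1), hξ1.inv ∘ b + id,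
    isKLFun_comparison hξ1.isKFun_inv hξ2.1 hα,
    (hξ1.isKFun_inv.comp ((hξ2.1.comp (hξ.isKFun_inv.comp (hσ.const_mul two_pos))).add
      hσ)).isKInfFun_add_id, fun k x01 x02 d hd u1 u2 hu => ?_⟩
  have hV0 : ∀ x1 x2, 0 ≤ V x1 x2 := fun _ _ =>
    (hξ1.1.nonneg (eNorm_nonneg_s3 _)).trans (hsandwich _ _).1
  have hWk := dissipation_le_max_iterate hξ2 hξ hσ hV0 (fun _ _ => (hsandwich _ _).2) hdecr
    x01 x02 hd hu k
  have hW0 := hξ1.monotone_inv <|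
    (monotone_comparisonFun hα).iterate k (hsandwich x01 x02).2
  calc eNorm (traj F x01 u1 k - traj F x02 u2 k)
      = hξ1.inv (ξ1 (eNorm (traj F x01 u1 k - traj F x02 u2 k))) :=
        (hξ1.inv_apply (eNorm_nonneg_s3 _)).symm
    _ ≤ hξ1.inv (max (g^[k] (V x01 x02)) (b d)) := hξ1.monotone_inv ((hsandwich _ _).1.trans hWk)
    _ ≤ hξ1.inv (g^[k] (V x01 x02)) + hξ1.inv (b d) := by
        rw [hξ1.monotone_inv.map_max]
        exact max_le_add_of_nonneg (hξ1.inv_nonneg _) (hξ1.inv_nonneg _)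
    _ ≤ _ := by
        have : 0 ≤ eNorm (x01 - x02) / (k + 1) := div_nonneg (eNorm_nonneg_s3 _) (by positivity)
        simp only [Function.comp_apply, Pi.add_apply, id]
        linarith

/-- **Dissipation-form δISS Lyapunov functions imply δISS** (Theorem 1 of the paper,
after Tran et al.): if the system `x(k+1) = F(x(k),u(k))` admits a nonnegative `V`
sandwiched between two `K∞` functions of `‖x1 - x2‖` and decreasing along pairs of
trajectories up to a class-`K` gain of `‖u1 - u2‖`, then the system is δISS. -/
theorem deltaISS_of_dissipation_lyapunov
    (n m : ℕ) (F : (Fin n → ℝ) → (Fin m → ℝ) → (Fin n → ℝ))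
    (V : (Fin n → ℝ) → (Fin n → ℝ) → ℝ)
    (hV0 : ∀ x1 x2, 0 ≤ V x1 x2)
    (ξ1 ξ2 ξ σ : ℝ → ℝ)
    (hξ1 : IsKInfFun ξ1) (hξ2 : IsKInfFun ξ2) (hξ : IsKInfFun ξ) (hσ : IsKFun σ)
    (hsandwich : ∀ x1 x2 : Fin n → ℝ,
      ξ1 (eNorm (x1 - x2)) ≤ V x1 x2 ∧ V x1 x2 ≤ ξ2 (eNorm (x1 - x2)))
    (hdecr : ∀ (x1 x2 : Fin n → ℝ) (u1 u2 : Fin m → ℝ),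
      V (F x1 u1) (F x2 u2) - V x1 x2 ≤ - ξ (eNorm (x1 - x2)) + σ (eNorm (u1 - u2))) :
    DeltaISS F :=
  deltaISS_of_dissipation_lyapunov_general n m F V ξ1 ξ2 ξ σ hξ1 hξ2 hξ hσ hsandwich hdecr
end

section
/- Let ν, m, l ∈ ℕ, let W_x ∈ ℝ^{ν×ν}, W_y ∈ ℝ^{ν×l}, W_{out1} ∈ ℝ^{l×ν}, W_{out2} ∈ ℝ^{l×m}, and set W_x* = W_x + W_y W_{out1}. Let A ∈ ℝ^{(ν+m)×(ν+m)} be the block matrix A = [[W_x*, W_y W_{out2}], [0_{m,ν}, 0_{m,m}]]. If the ℓ²-operator norm satisfies ‖W_x*‖ < 1, then there exists a symmetric positive definite matrix P = diag(P1, P2) ∈ ℝ^{(ν+m)×(ν+m)}, where P1 ∈ ℝ^{ν×ν} is diagonal and P2 ∈ ℝ^{m×m} is symmetric, such that A^T P A − P is negative definite. -/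
open Matrix
open scoped Matrix.Norms.L2Operator

/-!
Take `P = diag(I, d • I)` and write `v = (x, y)`, `V = W_y W_out2`. The last rows of `A` vanish,
so `vᵀ Aᵀ P A v = ‖W_x* x + V y‖² ≤ (‖W_x*‖ ‖x‖ + ‖V‖ ‖y‖)²`. Since `‖W_x*‖ < 1`, Young's
inequality on the cross term makes this `< ‖x‖² + d ‖y‖² = vᵀ P v` for `d` large enough.
Positive definiteness of `P` comes for free: `vᵀ P v > vᵀ Aᵀ P A v ≥ 0`.
-/

/-- Symmetric positive definiteness of a real matrix. -/
def PosDefM {ι : Type*} [Fintype ι] (P : Matrix ι ι ℝ) : Prop :=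
  Pᵀ = P ∧ ∀ v : ι → ℝ, v ≠ 0 → 0 < v ⬝ᵥ (P *ᵥ v)

/-- Negative definiteness of a real matrix. -/
def NegDefM {ι : Type*} [Fintype ι] (Q : Matrix ι ι ℝ) : Prop :=
  ∀ v : ι → ℝ, v ≠ 0 → v ⬝ᵥ (Q *ᵥ v) < 0

lemma sq_mul_add_mul_lt {a b s t : ℝ} (ha : a ^ 2 < 1) (hst : s ≠ 0 ∨ t ≠ 0) :
    (a * s + b * t) ^ 2 < s ^ 2 + (1 + 2 * b ^ 2 / (1 - a ^ 2)) * t ^ 2 := by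
  have hc : 0 < 1 - a ^ 2 := by linarith
  set k := 2 * b ^ 2 / (1 - a ^ 2)
  have hkc : k * (1 - a ^ 2) = 2 * b ^ 2 := div_mul_cancel₀ _ hc.ne'
  have young : 2 * a * b * s * t ≤ (1 - a ^ 2) / 2 * s ^ 2 + a ^ 2 * k * t ^ 2 := by
    refine le_of_mul_le_mul_left ?_ hc
    have hscaled : (1 - a ^ 2) * ((1 - a ^ 2) / 2 * s ^ 2 + a ^ 2 * k * t ^ 2 - 2 * a * b * s * t)
        = ((1 - a ^ 2) * s - 2 * a * b * t) ^ 2 / 2 := by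
      linear_combination a ^ 2 * t ^ 2 * hkc
    nlinarith [sq_nonneg ((1 - a ^ 2) * s - 2 * a * b * t)]
  have hk : 0 ≤ k * t ^ 2 := by positivity
  rcases hst with hs | ht
  · nlinarith [pow_pos (abs_pos.mpr hs) 2, sq_abs s]
  · nlinarith [pow_pos (abs_pos.mpr ht) 2, sq_abs t]

lemma Sum.comp_inl_ne_zero_or_comp_inr_ne_zero {α β M : Type*} [Zero M] {v : α ⊕ β → M}
    (hv : v ≠ 0) : v ∘ Sum.inl ≠ 0 ∨ v ∘ Sum.inr ≠ 0 := by
  contrapose! hv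
  rw [← Sum.elim_comp_inl_inr v, hv.1, hv.2, Sum.elim_zero_zero]

namespace Matrix

section Blocks

variable {l m n o R : Type*} [Fintype m] [Fintype n] [CommSemiring R]

lemma dotProduct_transpose_mul_mul_mulVec [Fintype l] (A : Matrix l n R) (P : Matrix l l R)
    (v : n → R) : v ⬝ᵥ ((Aᵀ * P * A) *ᵥ v) = (A *ᵥ v) ⬝ᵥ (P *ᵥ (A *ᵥ v)) := by
  rw [← mulVec_mulVec, ← mulVec_mulVec, dotProduct_mulVec, vecMul_transpose]

lemma fromBlocks_zero_zero_bottom_mulVec (W : Matrix l m R) (V : Matrix l n R) (v : m ⊕ n → R) :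
    fromBlocks W V (0 : Matrix o m R) 0 *ᵥ v
      = Sum.elim (W *ᵥ (v ∘ Sum.inl) + V *ᵥ (v ∘ Sum.inr)) 0 := by
  rw [fromBlocks_mulVec]
  simp only [zero_mulVec, add_zero]

lemma dotProduct_fromBlocks_zero_zero_offDiag_mulVec (P₁ : Matrix m m R) (P₂ : Matrix n n R)
    (v : m ⊕ n → R) :
    v ⬝ᵥ (fromBlocks P₁ 0 0 P₂ *ᵥ v)
      = (v ∘ Sum.inl) ⬝ᵥ (P₁ *ᵥ (v ∘ Sum.inl)) + (v ∘ Sum.inr) ⬝ᵥ (P₂ *ᵥ (v ∘ Sum.inr)) := by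
  rw [fromBlocks_mulVec]
  simp only [zero_mulVec, add_zero, zero_add]
  rw [← sumElim_dotProduct_sumElim, Sum.elim_comp_inl_inr]

end Blocks

lemma dotProduct_self_eq_norm_sq {n : Type*} [Fintype n] (u : n → ℝ) :
    u ⬝ᵥ u = ‖WithLp.toLp 2 u‖ ^ 2 := by
  rw [← real_inner_self_eq_norm_sq, EuclideanSpace.inner_toLp_toLp]
  rfl

section L2

variable {l m n : Type*} [Fintype l] [Fintype m] [Fintype n] [DecidableEq m] [DecidableEq n]

lemma norm_mulVec_add_mulVec_le (W : Matrix l m ℝ) (V : Matrix l n ℝ) (x : m → ℝ) (y : n → ℝ) :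
    ‖WithLp.toLp 2 (W *ᵥ x + V *ᵥ y)‖
      ≤ ‖W‖ * ‖WithLp.toLp 2 x‖ + ‖V‖ * ‖WithLp.toLp 2 y‖ := by
  rw [WithLp.toLp_add]
  exact (norm_add_le _ _).trans
    (add_le_add (W.l2_opNorm_mulVec (WithLp.toLp 2 x)) (V.l2_opNorm_mulVec (WithLp.toLp 2 y)))

lemma exists_dotProduct_self_mulVec_add_mulVec_lt (W : Matrix l m ℝ) (V : Matrix l n ℝ)
    (hW : ‖W‖ < 1) : ∃ d : ℝ, ∀ (x : m → ℝ) (y : n → ℝ), x ≠ 0 ∨ y ≠ 0 →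
      (W *ᵥ x + V *ᵥ y) ⬝ᵥ (W *ᵥ x + V *ᵥ y) < x ⬝ᵥ x + d * (y ⬝ᵥ y) := by
  refine ⟨1 + 2 * ‖V‖ ^ 2 / (1 - ‖W‖ ^ 2), fun x y hxy => ?_⟩
  rw [dotProduct_self_eq_norm_sq, dotProduct_self_eq_norm_sq, dotProduct_self_eq_norm_sq]
  have hW2 : ‖W‖ ^ 2 < 1 := by nlinarith [norm_nonneg W]
  have hxy' : ‖WithLp.toLp 2 x‖ ≠ 0 ∨ ‖WithLp.toLp 2 y‖ ≠ 0 := by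
    simpa only [ne_eq, norm_eq_zero, WithLp.toLp_eq_zero] using hxy
  calc ‖WithLp.toLp 2 (W *ᵥ x + V *ᵥ y)‖ ^ 2
      ≤ (‖W‖ * ‖WithLp.toLp 2 x‖ + ‖V‖ * ‖WithLp.toLp 2 y‖) ^ 2 :=
        pow_le_pow_left₀ (norm_nonneg _) (norm_mulVec_add_mulVec_le W V x y) 2
    _ < _ := sq_mul_add_mul_lt hW2 hxy'

end L2

end Matrix

/-- **ESN comparison (Proposition 4 of the paper).** If the spectral norm of
`W_x* = W_x + W_y W_out1` is `< 1`, then the block ESN state matrix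
`A = [[W_x*, W_y W_out2], [0, 0]]` admits a structured Lyapunov matrix
`P = diag(P1, P2)`, with `P1` diagonal and `P2` symmetric, which is positive
definite and satisfies `Aᵀ P A - P ≺ 0`. -/
theorem esn_condition_implies_structured_lyapunov
    (ν m l : ℕ)
    (Wx : Matrix (Fin ν) (Fin ν) ℝ) (Wy : Matrix (Fin ν) (Fin l) ℝ)
    (Wout1 : Matrix (Fin l) (Fin ν) ℝ) (Wout2 : Matrix (Fin l) (Fin m) ℝ)
    (hnorm : ‖Wx + Wy * Wout1‖ < 1) :
    ∃ (P1 : Fin ν → ℝ) (P2 : Matrix (Fin m) (Fin m) ℝ),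
      P2ᵀ = P2 ∧
      PosDefM (Matrix.fromBlocks (Matrix.diagonal P1) 0 0 P2) ∧
      NegDefM
        ((Matrix.fromBlocks (Wx + Wy * Wout1) (Wy * Wout2) 0 0)ᵀ
            * Matrix.fromBlocks (Matrix.diagonal P1) 0 0 P2
            * Matrix.fromBlocks (Wx + Wy * Wout1) (Wy * Wout2) 0 0
          - Matrix.fromBlocks (Matrix.diagonal P1) 0 0 P2) := by
  obtain ⟨d, hd⟩ := exists_dotProduct_self_mulVec_add_mulVec_lt _ (Wy * Wout2) hnorm
  set A := fromBlocks (Wx + Wy * Wout1) (Wy * Wout2) (0 : Matrix (Fin m) (Fin ν) ℝ) 0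
  set P := fromBlocks (diagonal (1 : Fin ν → ℝ)) 0 0 (d • (1 : Matrix (Fin m) (Fin m) ℝ))
  set w := fun v : Fin ν ⊕ Fin m → ℝ =>
    (Wx + Wy * Wout1) *ᵥ (v ∘ Sum.inl) + (Wy * Wout2) *ᵥ (v ∘ Sum.inr)
  have hquad : ∀ v, v ⬝ᵥ (P *ᵥ v)
      = (v ∘ Sum.inl) ⬝ᵥ (v ∘ Sum.inl) + d * ((v ∘ Sum.inr) ⬝ᵥ (v ∘ Sum.inr)) := by
    intro v
    rw [dotProduct_fromBlocks_zero_zero_offDiag_mulVec]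
    simp [smul_mulVec]
  have hquad_image : ∀ v, (A *ᵥ v) ⬝ᵥ (P *ᵥ (A *ᵥ v)) = w v ⬝ᵥ w v := by
    intro v
    rw [hquad, fromBlocks_zero_zero_bottom_mulVec]
    simp only [Sum.elim_comp_inl, Sum.elim_comp_inr, dotProduct_zero, mul_zero, add_zero, w]
  have hdecrease : ∀ v ≠ 0, (A *ᵥ v) ⬝ᵥ (P *ᵥ (A *ᵥ v)) < v ⬝ᵥ (P *ᵥ v) := fun v hv => by
    rw [hquad_image, hquad]
    exact hd _ _ (Sum.comp_inl_ne_zero_or_comp_inr_ne_zero hv)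
  refine ⟨1, d • 1, by simp, ⟨by simp [fromBlocks_transpose], fun v hv => ?_⟩, fun v hv => ?_⟩
  · refine lt_of_le_of_lt ?_ (hdecrease v hv)
    rw [hquad_image, dotProduct_self_eq_norm_sq]
    positivity
  · rw [sub_mulVec, dotProduct_sub, dotProduct_transpose_mul_mul_mulVec, sub_neg]
    exact hdecrease v hv
end

section
/- Let l, m̃, ν ∈ ℕ with ν, l, m̃ ≥ 1, let N ≥ 2 be an integer, set τ = (l+m̃)N − 2l − m̃ ≥ 0 and n = ν + (l+m̃)N − l. Let W_0 ∈ ℝ^{l×ν}, W_{φ1} ∈ ℝ^{ν×(l+m̃)}, W_{φ2} ∈ ℝ^{ν×τ}, W_{φ3} ∈ ℝ^{ν×l}, let W_φ = [W_{φ1} W_{φ2} W_{φ3}] ∈ ℝ^{ν×(l+m̃)N}, and let L_p > 0. Let A ∈ ℝ^{n×n} be the block matrix with row blocks of heights τ, l, m̃, ν and column blocks of widths l+m̃, τ, ν given by A = [[0, I_τ, 0], [0, 0, W_0], [0, 0, 0], [W_{φ1}, W_{φ2}, W_{φ3} W_0]], let W = diag(I_{n−ν}, L_p I_ν), and set Ã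 = W A. If the ℓ²-operator norms satisfy ‖W_0‖ ‖W_φ‖ < 1/(L_p √N), then there exists P = diag(P̃, P_D) ∈ ℝ^{n×n} positive definite, with P̃ ∈ ℝ^{(n−ν)×(n−ν)} symmetric and P_D ∈ ℝ^{ν×ν} diagonal, such that Ã^T P Ã − P is negative definite. -/
/-!
The Lyapunov matrix is diagonal. The first `n - ν` coordinates are cut into consecutive lags
of length `l + m̃`; lag `k` gets weight `(k + 1) ε` and the `ν` neuron states weight `1`. The
shift block of `A` moves every lag one step towards the front, so the weighted squares telescope
and leave `-ε (‖u‖² + ‖v‖²)`, where `(u, v, w)` are the column blocks of the state. What remains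
are the newest output `W₀ w`, of weight at most `(N - 1) ε`, and the neuron update
`L_p W_φ (u, v, W₀ w)`. With `b = ‖W₀‖` and `c = L_p ‖W_φ‖` the form decreases as soon as
`c² < ε` and `((N - 1) ε + c²) b² < 1`, and such an `ε` exists because `c² b² N < 1`.
-/

open Matrix
open scoped Matrix.Norms.L2Operator

def finShift {n : ℕ} (o k : ℕ) (h : o + k ≤ n) (a : Fin k) : Fin n :=
  ⟨o + a.1, by have := a.2; omega⟩

@[simp]
lemma finShift_val {n : ℕ} (o k : ℕ) (h : o + k ≤ n) (a : Fin k) :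
    (finShift o k h a : ℕ) = o + a := rfl

section BlockSums

variable {M : Type*} [AddCommMonoid M] {n : ℕ}

lemma sum_eq_sum_finShift₃ {a b c : ℕ} (hn : n = a + b + c) (F : Fin n → M) :
    ∑ i, F i = ∑ j : Fin a, F (finShift 0 a (by omega) j)
      + ∑ j : Fin b, F (finShift a b (by omega) j)
      + ∑ j : Fin c, F (finShift (a + b) c (by omega) j) := by
  subst hn
  rw [Fin.sum_univ_add, Fin.sum_univ_add]
  congr 2
  exact Fintype.sum_congr _ _ fun j => congrArg F (Fin.ext (by simp))

lemma sum_eq_sum_finShift₄ {a b c d : ℕ} (hn : n = a + b + c + d) (F : Fin n → M) :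
    ∑ i, F i = ∑ j : Fin a, F (finShift 0 a (by omega) j)
      + ∑ j : Fin b, F (finShift a b (by omega) j)
      + ∑ j : Fin c, F (finShift (a + b) c (by omega) j)
      + ∑ j : Fin d, F (finShift (a + b + c) d (by omega) j) := by
  subst hn
  rw [Fin.sum_univ_add, Fin.sum_univ_add, Fin.sum_univ_add]
  congr 3
  exact Fintype.sum_congr _ _ fun j => congrArg F (Fin.ext (by simp))

end BlockSums

lemma mulVec_finShift_of_blocks {R : Type*} [NonUnitalNonAssocSemiring R] {n a b c r k : ℕ}
    (hn : n = a + b + c) (hr : r + k ≤ n) {A : Matrix (Fin n) (Fin n) R}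
    {B₁ : Matrix (Fin k) (Fin a) R} {B₂ : Matrix (Fin k) (Fin b) R}
    {B₃ : Matrix (Fin k) (Fin c) R}
    (h₁ : ∀ i j, A (finShift r k hr i) (finShift 0 a (by omega) j) = B₁ i j)
    (h₂ : ∀ i j, A (finShift r k hr i) (finShift a b (by omega) j) = B₂ i j)
    (h₃ : ∀ i j, A (finShift r k hr i) (finShift (a + b) c (by omega) j) = B₃ i j)
    (x : Fin n → R) (i : Fin k) :
    (A *ᵥ x) (finShift r k hr i) = (B₁ *ᵥ (x ∘ finShift 0 a (by omega))) i
      + (B₂ *ᵥ (x ∘ finShift a b (by omega))) i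
      + (B₃ *ᵥ (x ∘ finShift (a + b) c (by omega))) i := by
  simp only [mulVec, dotProduct, Function.comp_apply, ← h₁, ← h₂, ← h₃]
  exact sum_eq_sum_finShift₃ hn _

lemma diagonal_mul_mulVec_apply {ι R : Type*} [Fintype ι] [DecidableEq ι] [CommSemiring R]
    (d : ι → R) (A : Matrix ι ι R) (x : ι → R) (i : ι) :
    ((diagonal d * A) *ᵥ x) i = d i * (A *ᵥ x) i := by
  rw [← mulVec_mulVec, mulVec_diagonal]

lemma sum_sq_mulVec_le {m n : Type*} [Fintype m] [Fintype n] [DecidableEq n]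
    (M : Matrix m n ℝ) (x : n → ℝ) :
    ∑ i, (M *ᵥ x) i ^ 2 ≤ ‖M‖ ^ 2 * ∑ j, x j ^ 2 := by
  have := pow_le_pow_left₀ (norm_nonneg _) (M.l2_opNorm_mulVec (WithLp.toLp 2 x)) 2
  rwa [mul_pow, EuclideanSpace.real_norm_sq_eq, EuclideanSpace.real_norm_sq_eq] at this

lemma sum_sq_pos_of_ne_zero {ι : Type*} [Fintype ι] {x : ι → ℝ} (hx : x ≠ 0) :
    0 < ∑ i, x i ^ 2 := by
  obtain ⟨i, hi⟩ := Function.ne_iff.mp hx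
  exact Finset.sum_pos' (fun j _ => sq_nonneg _) ⟨i, Finset.mem_univ _, sq_pos_of_ne_zero hi⟩

section DiagonalLyapunov

variable {ι : Type*} [Fintype ι] [DecidableEq ι]

lemma dotProduct_diagonal_mulVec_self (p y : ι → ℝ) :
    y ⬝ᵥ (diagonal p *ᵥ y) = ∑ i, p i * y i ^ 2 :=
  Finset.sum_congr rfl fun i _ => by rw [mulVec_diagonal]; ring

lemma posDefM_diagonal {p : ι → ℝ} (hp : ∀ i, 0 < p i) : PosDefM (diagonal p) := by
  refine ⟨diagonal_transpose p, fun v hv => ?_⟩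
  obtain ⟨i, hi⟩ := Function.ne_iff.mp hv
  rw [dotProduct_diagonal_mulVec_self]
  exact Finset.sum_pos' (fun j _ => by have := hp j; positivity)
    ⟨i, Finset.mem_univ _, mul_pos (hp i) (sq_pos_of_ne_zero hi)⟩

lemma negDefM_transpose_mul_diagonal_mul_sub {M : Matrix ι ι ℝ} {p : ι → ℝ}
    (h : ∀ x, x ≠ 0 → ∑ i, p i * (M *ᵥ x) i ^ 2 < ∑ i, p i * x i ^ 2) :
    NegDefM (Mᵀ * diagonal p * M - diagonal p) := by
  intro x hx
  rw [sub_mulVec, dotProduct_sub, ← mulVec_mulVec, ← mulVec_mulVec, dotProduct_mulVec,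
    vecMul_transpose, dotProduct_diagonal_mulVec_self, dotProduct_diagonal_mulVec_self]
  exact sub_neg.mpr (h x hx)

end DiagonalLyapunov

def lagWeight (q T : ℕ) (e : ℝ) (i : ℕ) : ℝ :=
  if i < T then e * (i / q + 1 : ℕ) else 1

section LagWeight

variable {q T : ℕ} {e : ℝ} {i : ℕ}

lemma lagWeight_pos (he : 0 < e) : 0 < lagWeight q T e i := by
  unfold lagWeight
  split_ifs <;> positivity

lemma lagWeight_of_lt_period (hi : i < q) (hqT : q ≤ T) : lagWeight q T e i = e := by
  simp [lagWeight, show i < T by omega, Nat.div_eq_of_lt hi]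

lemma lagWeight_period_add (hq : 0 < q) (hi : q + i < T) :
    lagWeight q T e (q + i) = lagWeight q T e i + e := by
  rw [lagWeight, lagWeight, if_pos hi, if_pos (show i < T by omega), Nat.add_comm q i,
    Nat.add_div_right i hq]
  push_cast
  ring

lemma lagWeight_of_le (hi : T ≤ i) : lagWeight q T e i = 1 := by
  simp [lagWeight, Nat.not_lt.mpr hi]

lemma lagWeight_le {M : ℕ} (he : 0 ≤ e) (hiT : i < T) (hiM : i < M * q) :
    lagWeight q T e i ≤ e * M := by
  have hk : i / q + 1 ≤ M :=
    (Nat.div_lt_iff_lt_mul (Nat.pos_of_mul_pos_left (Nat.zero_lt_of_lt hiM))).mpr hiM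
  rw [lagWeight, if_pos hiT]
  gcongr

lemma sum_lagWeight_mul_sq_eq {n a d : ℕ} (hn : n = q + a + d) (hT : T = a + q) (hq : 0 < q)
    (e : ℝ) (x : Fin n → ℝ) :
    ∑ i : Fin n, lagWeight q T e i * x i ^ 2 =
      e * ∑ j : Fin q, x (finShift 0 q (by omega) j) ^ 2
        + ∑ j : Fin a, (lagWeight q T e j + e) * x (finShift q a (by omega) j) ^ 2
        + ∑ j : Fin d, x (finShift (q + a) d (by omega) j) ^ 2 := by
  rw [sum_eq_sum_finShift₃ hn, Finset.mul_sum]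
  congr 1
  congr 1
  all_goals refine Fintype.sum_congr _ _ fun j => ?_
  · rw [finShift_val, lagWeight_of_lt_period (by omega) (by omega)]
  · rw [finShift_val, lagWeight_period_add hq (by omega)]
  · rw [finShift_val, lagWeight_of_le (by omega), one_mul]

lemma sum_lagWeight_mul_sq_le {n a b c d M : ℕ} (hn : n = a + b + c + d)
    (hT : T = a + b + c) (hab : a + b ≤ M * q) (he : 0 ≤ e) {y : Fin n → ℝ}
    (hy : ∀ i, y (finShift (a + b) c (by omega) i) = 0) :
    ∑ i : Fin n, lagWeight q T e i * y i ^ 2 ≤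
      ∑ j : Fin a, lagWeight q T e j * y (finShift 0 a (by omega) j) ^ 2
        + e * M * ∑ j : Fin b, y (finShift a b (by omega) j) ^ 2
        + ∑ j : Fin d, y (finShift (a + b + c) d (by omega) j) ^ 2 := by
  rw [sum_eq_sum_finShift₄ hn, Finset.mul_sum]
  simp only [hy, zero_pow two_ne_zero, mul_zero, Finset.sum_const_zero, add_zero]
  refine add_le_add (add_le_add (le_of_eq ?_) ?_) (le_of_eq ?_)
  · simp only [finShift_val, zero_add]
  · exact Finset.sum_le_sum fun j _ => mul_le_mul_of_nonneg_right
      (lagWeight_le he (by simp; omega) (by simp; omega)) (sq_nonneg _)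
  · exact Fintype.sum_congr _ _ fun j => by rw [finShift_val, lagWeight_of_le (by omega), one_mul]

end LagWeight

lemma sq_mul_sq_mul_lt_one_of_lt_one_div {a b L N : ℝ} (ha : 0 ≤ a) (hb : 0 ≤ b) (hL : 0 < L)
    (hN : 0 < N) (h : a * b < 1 / (L * √N)) : (L * b) ^ 2 * a ^ 2 * N < 1 := by
  have h₁ : a * b * (L * √N) < 1 := (lt_div_iff₀ (by positivity)).mp h
  calc (L * b) ^ 2 * a ^ 2 * N = (a * b * (L * √N)) ^ 2 := by
        rw [mul_pow, mul_pow, mul_pow, mul_pow, Real.sq_sqrt hN.le]; ring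
    _ < 1 := pow_lt_one₀ (by positivity) h₁ two_ne_zero

lemma exists_sq_lt_and_mul_sq_add_lt_one {b c M : ℝ} (hM : 0 ≤ M)
    (h : c ^ 2 * b ^ 2 * (M + 1) < 1) : ∃ e, c ^ 2 < e ∧ e * M * b ^ 2 + c ^ 2 * b ^ 2 < 1 := by
  have hden : 0 < M * b ^ 2 + 1 := by positivity
  set s := (1 - c ^ 2 * b ^ 2 * (M + 1)) / (M * b ^ 2 + 1)
  have hs : 0 < s := div_pos (by linarith) hden
  have hs' : s * (M * b ^ 2 + 1) = 1 - c ^ 2 * b ^ 2 * (M + 1) := div_mul_cancel₀ _ hden.ne'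
  exact ⟨c ^ 2 + s, by linarith, by nlinarith⟩

lemma mul_add_lt_of_small_gain {b c e M U V W G H : ℝ} (hU : 0 ≤ U) (hV : 0 ≤ V) (hW : 0 ≤ W)
    (hUVW : 0 < U + V + W) (hce : c ^ 2 < e) (hbe : e * M * b ^ 2 + c ^ 2 * b ^ 2 < 1)
    (heM : 0 ≤ e * M) (hG : G ≤ b ^ 2 * W) (hH : H ≤ c ^ 2 * (U + V + G)) :
    e * M * G + H < e * (U + V) + W := by
  have hGH : e * M * G + H ≤ c ^ 2 * (U + V) + (e * M * b ^ 2 + c ^ 2 * b ^ 2) * W := by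
    nlinarith [mul_le_mul_of_nonneg_left hG heM, mul_le_mul_of_nonneg_left hG (sq_nonneg c)]
  rcases (add_nonneg hU hV).eq_or_lt with hUV | hUV
  · nlinarith
  · nlinarith

lemma small_gain_sum_sq_lt {α β γ κ ι : Type*} [Fintype α] [Fintype β] [Fintype γ] [Fintype κ]
    [Fintype ι] [DecidableEq α] [DecidableEq β] [DecidableEq γ] [DecidableEq κ]
    {W₀ : Matrix κ γ ℝ} {W : Matrix ι ((α ⊕ β) ⊕ κ) ℝ} {L e M : ℝ}
    (hce : (L * ‖W‖) ^ 2 < e) (hbe : e * M * ‖W₀‖ ^ 2 + (L * ‖W‖) ^ 2 * ‖W₀‖ ^ 2 < 1)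
    (heM : 0 ≤ e * M) {u : α → ℝ} {v : β → ℝ} {w : γ → ℝ}
    (huvw : 0 < ∑ i, u i ^ 2 + ∑ i, v i ^ 2 + ∑ i, w i ^ 2) :
    e * M * ∑ i, (W₀ *ᵥ w) i ^ 2 + ∑ i, (L * (W *ᵥ Sum.elim (Sum.elim u v) (W₀ *ᵥ w)) i) ^ 2
      < e * (∑ i, u i ^ 2 + ∑ i, v i ^ 2) + ∑ i, w i ^ 2 := by
  have hH := sum_sq_mulVec_le W (Sum.elim (Sum.elim u v) (W₀ *ᵥ w))
  simp only [Fintype.sum_sum_type, Sum.elim_inl, Sum.elim_inr] at hH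
  simp only [mul_pow, ← Finset.mul_sum]
  refine mul_add_lt_of_small_gain (Finset.sum_nonneg fun _ _ => sq_nonneg _)
    (Finset.sum_nonneg fun _ _ => sq_nonneg _) (Finset.sum_nonneg fun _ _ => sq_nonneg _) huvw
    hce hbe heM (sum_sq_mulVec_le W₀ w) ?_
  rw [mul_pow, mul_assoc]
  exact mul_le_mul_of_nonneg_left hH (sq_nonneg L)

lemma sum_lagWeight_mul_sq_lt {l mt ν τ n M : ℕ} (hn : n = τ + l + mt + ν) (hq : 0 < l + mt)
    (hτl : τ + l ≤ M * (l + mt)) {W₀ : Matrix (Fin l) (Fin ν) ℝ}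
    {W : Matrix (Fin ν) ((Fin (l + mt) ⊕ Fin τ) ⊕ Fin l) ℝ} {L e : ℝ}
    (hce : (L * ‖W‖) ^ 2 < e) (hbe : e * M * ‖W₀‖ ^ 2 + (L * ‖W‖) ^ 2 * ‖W₀‖ ^ 2 < 1)
    {x y : Fin n → ℝ} (hx : x ≠ 0)
    (hy₁ : ∀ i, y (finShift 0 τ (by omega) i) = (x ∘ finShift (l + mt) τ (by omega)) i)
    (hy₂ : ∀ i, y (finShift τ l (by omega) i)
      = (W₀ *ᵥ (x ∘ finShift (l + mt + τ) ν (by omega))) i)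
    (hy₃ : ∀ i, y (finShift (τ + l) mt (by omega) i) = 0)
    (hy₄ : ∀ i, y (finShift (τ + l + mt) ν (by omega) i) = L * (W *ᵥ Sum.elim
      (Sum.elim (x ∘ finShift 0 (l + mt) (by omega)) (x ∘ finShift (l + mt) τ (by omega)))
      (W₀ *ᵥ (x ∘ finShift (l + mt + τ) ν (by omega)))) i) :
    ∑ i : Fin n, lagWeight (l + mt) (τ + l + mt) e i * y i ^ 2
      < ∑ i : Fin n, lagWeight (l + mt) (τ + l + mt) e i * x i ^ 2 := by
  have hn' : n = l + mt + τ + ν := by omega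
  set u := x ∘ finShift 0 (l + mt) (by omega)
  set v := x ∘ finShift (l + mt) τ (by omega)
  set w := x ∘ finShift (l + mt + τ) ν (by omega)
  have he : 0 < e := (sq_nonneg _).trans_lt hce
  have huvw := sum_sq_pos_of_ne_zero hx
  rw [sum_eq_sum_finShift₃ hn'] at huvw
  have hgain := small_gain_sum_sq_lt hce hbe (by positivity) (u := u) (v := v) (w := w) huvw
  calc _ ≤ ∑ j : Fin τ, lagWeight (l + mt) (τ + l + mt) e j * v j ^ 2
        + e * M * ∑ j, (W₀ *ᵥ w) j ^ 2
        + ∑ j, (L * (W *ᵥ Sum.elim (Sum.elim u v) (W₀ *ᵥ w)) j) ^ 2 := by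
        simpa only [hy₁, hy₂, hy₄] using sum_lagWeight_mul_sq_le hn rfl hτl he.le hy₃
    _ < e * ∑ j, u j ^ 2 + ∑ j : Fin τ, (lagWeight (l + mt) (τ + l + mt) e j + e) * v j ^ 2
        + ∑ j, w j ^ 2 := by
        simp only [add_mul, Finset.sum_add_distrib, ← Finset.mul_sum]
        linarith
    _ = _ := (sum_lagWeight_mul_sq_eq hn' (by omega) hq e x).symm

set_option maxHeartbeats 1000000 in
/-- **Shallow NNARX comparison (Proposition 6 of the paper).** If
`‖W_0‖ ‖W_φ‖ < 1/(L_p √N)`, then the NNARX state matrix `A` (given blockwise, with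
row blocks of heights `τ, l, m̃, ν` and column blocks of widths `l+m̃, τ, ν`) together
with `Ã = W A`, `W = diag(I_{n-ν}, L_p I_ν)`, admits a positive definite Lyapunov
matrix `P = diag(P̃, P_D)` with `P_D` diagonal such that `Ãᵀ P Ã - P ≺ 0`. -/
theorem nnarx_condition_implies_structured_lyapunov
    (l mt ν N τ n : ℕ)
    (hl : 1 ≤ l) (hN : 2 ≤ N)
    (hτ : τ + 2 * l + mt = (l + mt) * N)
    (hn : n = τ + l + mt + ν)
    (W0 : Matrix (Fin l) (Fin ν) ℝ)
    (Wp1 : Matrix (Fin ν) (Fin (l + mt)) ℝ)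
    (Wp2 : Matrix (Fin ν) (Fin τ) ℝ)
    (Wp3 : Matrix (Fin ν) (Fin l) ℝ)
    (Lp : ℝ) (hLp : 0 < Lp)
    (A : Matrix (Fin n) (Fin n) ℝ)
    -- first row block (height τ): `[0, I_τ, 0]`
    (hA11 : ∀ (i : Fin τ) (j : Fin (l + mt)),
      A (finShift 0 τ (by omega) i) (finShift 0 (l + mt) (by omega) j) = 0)
    (hA12 : ∀ (i : Fin τ) (j : Fin τ),
      A (finShift 0 τ (by omega) i) (finShift (l + mt) τ (by omega) j)
        = if i = j then 1 else 0)
    (hA13 : ∀ (i : Fin τ) (j : Fin ν),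
      A (finShift 0 τ (by omega) i) (finShift (l + mt + τ) ν (by omega) j) = 0)
    -- second row block (height l): `[0, 0, W_0]`
    (hA21 : ∀ (i : Fin l) (j : Fin (l + mt)),
      A (finShift τ l (by omega) i) (finShift 0 (l + mt) (by omega) j) = 0)
    (hA22 : ∀ (i : Fin l) (j : Fin τ),
      A (finShift τ l (by omega) i) (finShift (l + mt) τ (by omega) j) = 0)
    (hA23 : ∀ (i : Fin l) (j : Fin ν),
      A (finShift τ l (by omega) i) (finShift (l + mt + τ) ν (by omega) j) = W0 i j)
    -- third row block (height m̃): `[0, 0, 0]`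
    (hA31 : ∀ (i : Fin mt) (j : Fin (l + mt)),
      A (finShift (τ + l) mt (by omega) i) (finShift 0 (l + mt) (by omega) j) = 0)
    (hA32 : ∀ (i : Fin mt) (j : Fin τ),
      A (finShift (τ + l) mt (by omega) i) (finShift (l + mt) τ (by omega) j) = 0)
    (hA33 : ∀ (i : Fin mt) (j : Fin ν),
      A (finShift (τ + l) mt (by omega) i) (finShift (l + mt + τ) ν (by omega) j) = 0)
    -- fourth row block (height ν): `[W_{φ1}, W_{φ2}, W_{φ3} W_0]`
    (hA41 : ∀ (i : Fin ν) (j : Fin (l + mt)),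
      A (finShift (τ + l + mt) ν (by omega) i) (finShift 0 (l + mt) (by omega) j)
        = Wp1 i j)
    (hA42 : ∀ (i : Fin ν) (j : Fin τ),
      A (finShift (τ + l + mt) ν (by omega) i) (finShift (l + mt) τ (by omega) j)
        = Wp2 i j)
    (hA43 : ∀ (i : Fin ν) (j : Fin ν),
      A (finShift (τ + l + mt) ν (by omega) i) (finShift (l + mt + τ) ν (by omega) j)
        = (Wp3 * W0) i j)
    -- the spectral-norm condition `‖W_0‖ ‖W_φ‖ < 1/(L_p √N)`, with `W_φ = [W_{φ1} W_{φ2} W_{φ3}]`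
    (hnorm : ‖W0‖ * ‖Matrix.fromCols (Matrix.fromCols Wp1 Wp2) Wp3‖
      < 1 / (Lp * Real.sqrt N)) :
    ∃ P : Matrix (Fin n) (Fin n) ℝ,
      PosDefM P ∧
      -- `P = diag(P̃, P_D)`: the off-diagonal blocks coupling the first `n - ν = τ+l+m̃`
      -- coordinates with the last `ν` coordinates vanish
      (∀ i j : Fin n, (i : ℕ) < τ + l + mt → τ + l + mt ≤ (j : ℕ) →
        P i j = 0 ∧ P j i = 0) ∧
      -- `P_D` is diagonal
      (∀ i j : Fin n, τ + l + mt ≤ (i : ℕ) → τ + l + mt ≤ (j : ℕ) → i ≠ j → P i j = 0) ∧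
      NegDefM
        ((Matrix.diagonal (fun i : Fin n => if (i : ℕ) < τ + l + mt then 1 else Lp) * A)ᵀ
            * P
            * (Matrix.diagonal (fun i : Fin n => if (i : ℕ) < τ + l + mt then 1 else Lp) * A)
          - P) := by
  obtain ⟨M, rfl⟩ : ∃ M, N = M + 1 := ⟨N - 1, by omega⟩
  have hτl : τ + l ≤ M * (l + mt) := by rw [Nat.mul_succ, Nat.mul_comm (l + mt)] at hτ; omega
  have hn' : n = l + mt + τ + ν := by omega
  obtain ⟨e, hce, hbe⟩ := exists_sq_lt_and_mul_sq_add_lt_one (M := M) (by positivity) <| by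
    simpa using sq_mul_sq_mul_lt_one_of_lt_one_div (norm_nonneg _) (norm_nonneg _) hLp
      (by positivity) hnorm
  refine ⟨diagonal fun i => lagWeight (l + mt) (τ + l + mt) e i,
    posDefM_diagonal fun _ => lagWeight_pos ((sq_nonneg _).trans_lt hce),
    fun i j hi hj => ⟨diagonal_apply_ne _ (Fin.ne_of_val_ne (by omega)),
      diagonal_apply_ne _ (Fin.ne_of_val_ne (by omega))⟩,
    fun i j _ _ => diagonal_apply_ne _,
    negDefM_transpose_mul_diagonal_mul_sub fun x hx =>
      sum_lagWeight_mul_sq_lt hn (by omega) hτl hce hbe hx (fun i => ?_) (fun i => ?_)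
        (fun i => ?_) (fun i => ?_)⟩
  all_goals rw [diagonal_mul_mulVec_apply]
  · rw [if_pos (by simp; omega), mulVec_finShift_of_blocks hn' _ (B₁ := 0) (B₂ := 1) (B₃ := 0)
      hA11 (fun i j => (hA12 i j).trans one_apply.symm) hA13]
    simp
  · rw [if_pos (by simp; omega),
      mulVec_finShift_of_blocks hn' _ (B₁ := 0) (B₂ := 0) hA21 hA22 hA23]
    simp
  · rw [mulVec_finShift_of_blocks hn' _ (B₁ := 0) (B₂ := 0) (B₃ := 0) hA31 hA32 hA33]
    simp
  · rw [if_neg (by simp), mulVec_finShift_of_blocks hn' _ hA41 hA42 hA43]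
    simp [mulVec_mulVec]
end

section
/- Let M ∈ ℝ^{n×n}, let |M| denote the matrix of entrywise absolute values of M, and let P ∈ ℝ^{n×n} be a diagonal matrix with strictly positive diagonal entries. If |M|^T P |M| − P is negative definite, then M^T P M − P is negative definite. -/
open Matrix

/-- Entrywise absolute value of a matrix. -/
def absM {ι κ : Type*} (A : Matrix ι κ ℝ) : Matrix ι κ ℝ :=
  Matrix.of fun i j => |A i j|

lemma quad_form_eq {n : ℕ} (A : Matrix (Fin n) (Fin n) ℝ) (p : Fin n → ℝ)
    (v : Fin n → ℝ) :
    v ⬝ᵥ ((Aᵀ * Matrix.diagonal p * A) *ᵥ v) = ∑ i, p i * (A *ᵥ v) i ^ 2 := by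
  rw [Matrix.mul_assoc,
    ← Matrix.mulVec_mulVec, ← Matrix.mulVec_mulVec, Matrix.dotProduct_mulVec,
    Matrix.vecMul_transpose]
  simp [dotProduct, Matrix.mulVec_diagonal]
  congr 1; ext i; ring

/-- **Comparison lemma** in the proof of Proposition 8: for a diagonal matrix `P`
with strictly positive diagonal entries, `|M|ᵀ P |M| - P ≺ 0` implies `Mᵀ P M - P ≺ 0`. -/
theorem negDef_of_negDef_abs
    (n : ℕ) (M : Matrix (Fin n) (Fin n) ℝ) (p : Fin n → ℝ) (hp : ∀ i, 0 < p i)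
    (h : NegDefM ((absM M)ᵀ * Matrix.diagonal p * absM M - Matrix.diagonal p)) :
    NegDefM (Mᵀ * Matrix.diagonal p * M - Matrix.diagonal p) := by
  intro v hv
  set w : Fin n → ℝ := fun i => |v i| with hw
  have hwne : w ≠ 0 := by
    intro h0
    apply hv
    funext i
    have := congrFun h0 i
    simpa [hw, abs_eq_zero] using this
  have key := h w hwne
  rw [Matrix.sub_mulVec, dotProduct_sub] at key ⊢
  have hP : v ⬝ᵥ (Matrix.diagonal p *ᵥ v) = w ⬝ᵥ (Matrix.diagonal p *ᵥ w) := by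
    simp [dotProduct, Matrix.mulVec_diagonal, hw]
    congr 1; ext i
    linear_combination (-(p i)) * abs_mul_abs_self (v i)
  have hQ : v ⬝ᵥ ((Mᵀ * Matrix.diagonal p * M) *ᵥ v)
      ≤ w ⬝ᵥ (((absM M)ᵀ * Matrix.diagonal p * absM M) *ᵥ w) := by
    rw [quad_form_eq, quad_form_eq]
    apply Finset.sum_le_sum
    intro i _
    have h1 : |(M *ᵥ v) i| ≤ (absM M *ᵥ w) i := by
      simp only [Matrix.mulVec, dotProduct, absM, Matrix.of_apply, hw]
      calc |∑ j, M i j * v j| ≤ ∑ j, |M i j * v j| := Finset.abs_sum_le_sum_abs _ _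
        _ = ∑ j, |M i j| * |v j| := by simp [abs_mul]
    have h2 : (M *ᵥ v) i ^ 2 ≤ (absM M *ᵥ w) i ^ 2 := by
      have := sq_abs ((M *ᵥ v) i)
      nlinarith [abs_nonneg ((M *ᵥ v) i)]
    nlinarith [(hp i).le]
  linarith
end

section
/- Let n1, n2 ∈ ℕ, let Ã1 ∈ ℝ^{n1×n1}, Ã2 ∈ ℝ^{n2×n2}, Ã21 ∈ ℝ^{n2×n1}, and let P1 ∈ ℝ^{n1×n1}, P2 ∈ ℝ^{n2×n2} be symmetric positive definite matrices such that Ã1^T P1 Ã1 − P1 and Ã2^T P2 Ã2 − P2 are both negative definite. Let Ã ∈ ℝ^{(n1+n2)×(n1+n2)} be the block lower-triangular matrix Ã = [[Ã1, 0_{n1,n2}], [Ã21, Ã2]]. Then there exists ρ > 0 such that the block-diagonal matrix P = diag(ρ P1, P2) is symmetric positive definite and Ã^T P Ã − P is negative definite. -/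
open Matrix

lemma conj_quad {m n : Type*} [Fintype m] [Fintype n] (A : Matrix n m ℝ) (P : Matrix n n ℝ)
    (x : m → ℝ) :
    x ⬝ᵥ ((Aᵀ * P * A) *ᵥ x) = (A *ᵥ x) ⬝ᵥ (P *ᵥ (A *ᵥ x)) := by
  rw [← mulVec_mulVec, ← mulVec_mulVec, dotProduct_mulVec, vecMul_transpose]

lemma quad_scale {ι : Type*} [Fintype ι] (M : Matrix ι ι ℝ) (a : ℝ) (v : ι → ℝ) :
    (a • v) ⬝ᵥ (M *ᵥ (a • v)) = a ^ 2 * (v ⬝ᵥ (M *ᵥ v)) := by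
  rw [mulVec_smul, dotProduct_smul, smul_dotProduct]
  simp [smul_eq_mul]; ring

lemma quad_continuous {ι : Type*} [Fintype ι] (M : Matrix ι ι ℝ) :
    Continuous fun v : ι → ℝ => v ⬝ᵥ (M *ᵥ v) := by
  simp only [dotProduct, Matrix.mulVec]
  exact continuous_finset_sum _ fun i _ =>
    (continuous_apply i).mul (continuous_finset_sum _ fun j _ =>
      continuous_const.mul (continuous_apply j))

lemma quad_dominates {ι : Type*} [Fintype ι] (M N : Matrix ι ι ℝ)
    (hM : ∀ v : ι → ℝ, v ≠ 0 → 0 < v ⬝ᵥ (M *ᵥ v)) :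
    ∃ c : ℝ, 0 < c ∧ ∀ v : ι → ℝ, v ⬝ᵥ (N *ᵥ v) ≤ c * (v ⬝ᵥ (M *ᵥ v)) := by
  rcases isEmpty_or_nonempty ι with hι | hι
  · exact ⟨1, one_pos, fun v => by simp [Subsingleton.elim v 0]⟩
  · have hS : (Metric.sphere (0 : ι → ℝ) 1).Nonempty :=
      NormedSpace.sphere_nonempty.mpr zero_le_one
    have hC : IsCompact (Metric.sphere (0 : ι → ℝ) 1) := isCompact_sphere _ _
    obtain ⟨u, huS, hu⟩ := hC.exists_isMinOn hS (quad_continuous M).continuousOn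
    obtain ⟨u', hu'S, hu'⟩ := hC.exists_isMaxOn hS (quad_continuous N).continuousOn
    have hu0 : u ≠ 0 := by
      intro h; rw [mem_sphere_zero_iff_norm, h] at huS; simp at huS
    set m : ℝ := u ⬝ᵥ (M *ᵥ u) with hm_def
    set K : ℝ := u' ⬝ᵥ (N *ᵥ u') with hK_def
    have hm : 0 < m := hM u hu0
    refine ⟨(K ⊔ 0) / m + 1, by positivity, fun v => ?_⟩
    set c : ℝ := (K ⊔ 0) / m + 1 with hc_def
    have hcm : K ⊔ 0 < c * m := by
      have : c * m = (K ⊔ 0) + m := by rw [hc_def]; field_simp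
      linarith
    have hc0 : 0 < c := by positivity
    rcases eq_or_ne v 0 with rfl | hv
    · simp [zero_dotProduct]
    · have ht : 0 < ‖v‖ := norm_pos_iff.mpr hv
      set t : ℝ := ‖v‖ with h
      have hveq : v = t • (t⁻¹ • v) := by
        rw [smul_smul, mul_inv_cancel₀ ht.ne', one_smul]
      have huu : t⁻¹ • v ∈ Metric.sphere (0 : ι → ℝ) 1 := by
        rw [mem_sphere_zero_iff_norm, norm_smul, norm_inv, norm_norm,
          inv_mul_cancel₀ ht.ne']
      have h1 : (t⁻¹ • v) ⬝ᵥ (N *ᵥ (t⁻¹ • v)) ≤ K := hu' huu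
      have h2 : m ≤ (t⁻¹ • v) ⬝ᵥ (M *ᵥ (t⁻¹ • v)) := hu huu
      have ht2 : (0:ℝ) < t ^ 2 := by positivity
      have hK0 : (t⁻¹ • v) ⬝ᵥ (N *ᵥ (t⁻¹ • v)) ≤ K ⊔ 0 := h1.trans (le_max_left _ _)
      have h3 : (t⁻¹ • v) ⬝ᵥ (N *ᵥ (t⁻¹ • v)) ≤ c * ((t⁻¹ • v) ⬝ᵥ (M *ᵥ (t⁻¹ • v))) :=
        hK0.trans (hcm.le.trans (mul_le_mul_of_nonneg_left h2 hc0.le))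
      have e1 : t ^ 2 * ((t⁻¹ • v) ⬝ᵥ (N *ᵥ (t⁻¹ • v))) = v ⬝ᵥ (N *ᵥ v) := by
        rw [quad_scale]; field_simp
      have e2 : t ^ 2 * ((t⁻¹ • v) ⬝ᵥ (M *ᵥ (t⁻¹ • v))) = v ⬝ᵥ (M *ᵥ v) := by
        rw [quad_scale]; field_simp
      rw [← e1, ← e2]
      nlinarith [mul_le_mul_of_nonneg_left h3 ht2.le]

lemma quad_swap {ι : Type*} [Fintype ι] (P : Matrix ι ι ℝ) (hsym : Pᵀ = P)
    (w z : ι → ℝ) : z ⬝ᵥ (P *ᵥ w) = w ⬝ᵥ (P *ᵥ z) := by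
  conv_lhs => rw [← hsym, mulVec_transpose, dotProduct_comm, ← dotProduct_mulVec]

lemma cauchy_psd {ι : Type*} [Fintype ι] (P : Matrix ι ι ℝ) (hsym : Pᵀ = P)
    (hpsd : ∀ v : ι → ℝ, 0 ≤ v ⬝ᵥ (P *ᵥ v)) (w z : ι → ℝ) (ε : ℝ) (hε : 0 < ε) :
    2 * (w ⬝ᵥ (P *ᵥ z)) ≤ ε⁻¹ * (w ⬝ᵥ (P *ᵥ w)) + ε * (z ⬝ᵥ (P *ᵥ z)) := by
  have hswap : z ⬝ᵥ (P *ᵥ w) = w ⬝ᵥ (P *ᵥ z) := quad_swap P hsym w z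
  have h := hpsd (w - ε • z)
  rw [mulVec_sub, mulVec_smul, sub_dotProduct, smul_dotProduct, dotProduct_sub,
    dotProduct_sub, dotProduct_smul, dotProduct_smul, smul_eq_mul, smul_eq_mul,
    smul_eq_mul, hswap] at h
  have key : ε * (2 * (w ⬝ᵥ (P *ᵥ z))) ≤ w ⬝ᵥ (P *ᵥ w) + ε ^ 2 * (z ⬝ᵥ (P *ᵥ z)) := by
    nlinarith [h]
  rw [← sub_nonneg]
  have : ε⁻¹ * (w ⬝ᵥ (P *ᵥ w)) + ε * (z ⬝ᵥ (P *ᵥ z)) - 2 * (w ⬝ᵥ (P *ᵥ z))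
      = ε⁻¹ * ((w ⬝ᵥ (P *ᵥ w) + ε ^ 2 * (z ⬝ᵥ (P *ᵥ z))) - ε * (2 * (w ⬝ᵥ (P *ᵥ z)))) := by
    field_simp
  rw [this]
  exact mul_nonneg (by positivity) (by linarith)

/-- **Series interconnection (Proposition 9 of the paper).** If `Ã1ᵀ P1 Ã1 - P1 ≺ 0`
and `Ã2ᵀ P2 Ã2 - P2 ≺ 0` with `P1, P2` symmetric positive definite, then for the block
lower-triangular matrix `Ã = [[Ã1, 0], [Ã21, Ã2]]` there exists `ρ > 0` such that
`P = diag(ρ P1, P2)` is symmetric positive definite and `Ãᵀ P Ã - P ≺ 0`. -/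
theorem cascade_structured_lyapunov
    (n1 n2 : ℕ)
    (A1 : Matrix (Fin n1) (Fin n1) ℝ) (A2 : Matrix (Fin n2) (Fin n2) ℝ)
    (A21 : Matrix (Fin n2) (Fin n1) ℝ)
    (P1 : Matrix (Fin n1) (Fin n1) ℝ) (P2 : Matrix (Fin n2) (Fin n2) ℝ)
    (hP1 : PosDefM P1) (hP2 : PosDefM P2)
    (hNeg1 : NegDefM (A1ᵀ * P1 * A1 - P1))
    (hNeg2 : NegDefM (A2ᵀ * P2 * A2 - P2)) :
    ∃ ρ : ℝ, 0 < ρ ∧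
      PosDefM (Matrix.fromBlocks (ρ • P1) 0 0 P2) ∧
      NegDefM
        ((Matrix.fromBlocks A1 0 A21 A2)ᵀ
            * Matrix.fromBlocks (ρ • P1) 0 0 P2
            * Matrix.fromBlocks A1 0 A21 A2
          - Matrix.fromBlocks (ρ • P1) 0 0 P2) := by
  obtain ⟨hP1s, hP1p⟩ := hP1
  obtain ⟨hP2s, hP2p⟩ := hP2
  have hP1psd : ∀ v : Fin n1 → ℝ, 0 ≤ v ⬝ᵥ (P1 *ᵥ v) := by
    intro v; rcases eq_or_ne v 0 with rfl | h
    · simp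
    · exact (hP1p v h).le
  have hP2psd : ∀ v : Fin n2 → ℝ, 0 ≤ v ⬝ᵥ (P2 *ᵥ v) := by
    intro v; rcases eq_or_ne v 0 with rfl | h
    · simp
    · exact (hP2p v h).le
  have hM1 : ∀ v : Fin n1 → ℝ, v ≠ 0 → 0 < v ⬝ᵥ ((P1 - A1ᵀ * P1 * A1) *ᵥ v) := by
    intro v hv
    have h := hNeg1 v hv
    rw [sub_mulVec, dotProduct_sub] at h ⊢
    linarith
  have hM2 : ∀ v : Fin n2 → ℝ, v ≠ 0 → 0 < v ⬝ᵥ ((P2 - A2ᵀ * P2 * A2) *ᵥ v) := by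
    intro v hv
    have h := hNeg2 v hv
    rw [sub_mulVec, dotProduct_sub] at h ⊢
    linarith
  obtain ⟨c1, hc1, hc1b⟩ := quad_dominates _ (A21ᵀ * P2 * A21) hM1
  obtain ⟨c3, hc3, hc3b⟩ := quad_dominates _ (A2ᵀ * P2 * A2) hM2
  refine ⟨(1 + 2 * c3) * c1 + 1, by positivity, ⟨?_, ?_⟩, ?_⟩
  · rw [fromBlocks_transpose, transpose_smul, hP1s, hP2s]
    simp
  · -- positive definiteness of the block matrix
    intro v hv
    rw [← Sum.elim_comp_inl_inr v] at hv ⊢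
    set x : Fin n1 → ℝ := v ∘ Sum.inl with hxdef
    set y : Fin n2 → ℝ := v ∘ Sum.inr with hydef
    have hx0y0 : x ≠ 0 ∨ y ≠ 0 := by
      by_contra hcon; push_neg at hcon
      exact hv (by rw [hcon.1, hcon.2]; exact Sum.elim_zero_zero)
    simp only [fromBlocks_mulVec, Sum.elim_comp_inl, Sum.elim_comp_inr,
      Matrix.zero_mulVec, add_zero, zero_add, sumElim_dotProduct_sumElim,
      smul_mulVec, dotProduct_smul, smul_eq_mul]
    have h1 := hP1psd x
    have h2 := hP2psd y
    set ρ : ℝ := (1 + 2 * c3) * c1 + 1 with hρdef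
    have hρ : 0 < ρ := by positivity
    rcases hx0y0 with hx | hy
    · nlinarith [hP1p x hx]
    · nlinarith [hP2p y hy]
  · -- negative definiteness
    intro v hv
    rw [← Sum.elim_comp_inl_inr v] at hv ⊢
    set x : Fin n1 → ℝ := v ∘ Sum.inl with hxdef
    set y : Fin n2 → ℝ := v ∘ Sum.inr with hydef
    have hx0y0 : x ≠ 0 ∨ y ≠ 0 := by
      by_contra hcon; push_neg at hcon
      exact hv (by rw [hcon.1, hcon.2]; exact Sum.elim_zero_zero)
    rw [sub_mulVec, dotProduct_sub, conj_quad]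
    simp only [fromBlocks_mulVec, Sum.elim_comp_inl, Sum.elim_comp_inr,
      Matrix.zero_mulVec, add_zero, zero_add, sumElim_dotProduct_sumElim,
      smul_mulVec, dotProduct_smul, smul_eq_mul, Matrix.mulVec_add,
      dotProduct_add, add_dotProduct]
    rw [quad_swap P2 hP2s (A21 *ᵥ x) (A2 *ᵥ y)]
    -- scalar abbreviations
    have hb1 := hc1b x
    rw [conj_quad, sub_mulVec, dotProduct_sub, conj_quad] at hb1
    have hb3 := hc3b y
    rw [conj_quad, sub_mulVec, dotProduct_sub, conj_quad] at hb3
    have hcau := cauchy_psd P2 hP2s hP2psd (A21 *ᵥ x) (A2 *ᵥ y) (2 * c3)⁻¹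
      (by positivity)
    rw [inv_inv] at hcau
    have hS1nn : 0 ≤ x ⬝ᵥ (P1 *ᵥ x) - (A1 *ᵥ x) ⬝ᵥ (P1 *ᵥ (A1 *ᵥ x)) := by
      rcases eq_or_ne x 0 with h0 | hx
      · rw [h0]; simp
      · have := hM1 x hx
        rw [sub_mulVec, dotProduct_sub, conj_quad] at this
        linarith
    have hS2nn : 0 ≤ y ⬝ᵥ (P2 *ᵥ y) - (A2 *ᵥ y) ⬝ᵥ (P2 *ᵥ (A2 *ᵥ y)) := by
      rcases eq_or_ne y 0 with h0 | hy
      · rw [h0]; simp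
      · have := hM2 y hy
        rw [sub_mulVec, dotProduct_sub, conj_quad] at this
        linarith
    have ha : 0 ≤ (A21 *ᵥ x) ⬝ᵥ (P2 *ᵥ (A21 *ᵥ x)) := hP2psd _
    have hd : 0 ≤ (A2 *ᵥ y) ⬝ᵥ (P2 *ᵥ (A2 *ᵥ y)) := hP2psd _
    have hhalf : (2 * c3)⁻¹ * ((A2 *ᵥ y) ⬝ᵥ (P2 *ᵥ (A2 *ᵥ y)))
        ≤ (y ⬝ᵥ (P2 *ᵥ y) - (A2 *ᵥ y) ⬝ᵥ (P2 *ᵥ (A2 *ᵥ y))) / 2 := by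
      have h := mul_le_mul_of_nonneg_left hb3 (by positivity : (0:ℝ) ≤ (2 * c3)⁻¹)
      have he : (2 * c3)⁻¹ * (c3 * (y ⬝ᵥ (P2 *ᵥ y) - (A2 *ᵥ y) ⬝ᵥ (P2 *ᵥ (A2 *ᵥ y))))
          = (y ⬝ᵥ (P2 *ᵥ y) - (A2 *ᵥ y) ⬝ᵥ (P2 *ᵥ (A2 *ᵥ y))) / 2 := by
        field_simp
      linarith [he ▸ h]
    have hmul := mul_le_mul_of_nonneg_left hb1 (by positivity : (0:ℝ) ≤ 2 * c3)
    rcases hx0y0 with hx | hy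
    · have hS1 := hM1 x hx
      rw [sub_mulVec, dotProduct_sub, conj_quad] at hS1
      nlinarith [hcau, hb1, hmul, hS2nn, hhalf]
    · have hS2 := hM2 y hy
      rw [sub_mulVec, dotProduct_sub, conj_quad] at hS2
      nlinarith [hcau, hb1, hmul, hS1nn, hhalf]
end

section
/- Let F̃ ∈ ℝ^{n×n}, G̃ ∈ ℝ^{n×p}, let P ∈ ℝ^{n×n} be symmetric, and let H ∈ ℝ^{p×n}. Suppose the 2n×2n block matrix [[P, (F̃P + G̃H)^T], [F̃P + G̃H, P]] is positive definite. Then P is positive definite (hence invertible), and setting J = H P^{−1} and Ã = F̃ + G̃ J, the matrix Ã^T P^{−1} Ã − P^{−1} is negative definite. -/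
open Matrix

/-! With `M = F̃P + G̃H`, the lower-right block of the LMI gives `P ≻ 0`, and its Schur complement
`P - Mᵀ P⁻¹ M` is positive definite. Since `Ã = M P⁻¹`, congruence by the symmetric matrix `P⁻¹`
turns this Schur complement into `P⁻¹ - Ãᵀ P⁻¹ Ã`. -/

theorem posDefM_iff_posDef {ι : Type*} [Fintype ι] {P : Matrix ι ι ℝ} :
    PosDefM P ↔ P.PosDef := by
  simp [posDef_iff_dotProduct_mulVec, PosDefM, IsHermitian]

theorem negDefM_of_posDef_neg {ι : Type*} [Fintype ι] {Q : Matrix ι ι ℝ} (hQ : (-Q).PosDef) :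
    NegDefM Q := fun v hv => by
  simpa [neg_mulVec] using hQ.dotProduct_mulVec_pos hv

namespace Matrix.PosDef

theorem of_fromBlocks₂₂ {m n R : Type*} [Ring R] [PartialOrder R] [StarRing R]
    {A : Matrix m m R} {B : Matrix m n R} {C : Matrix n m R} {D : Matrix n n R}
    (h : (fromBlocks A B C D).PosDef) : D.PosDef :=
  h.submatrix Sum.inr_injective

variable {m n K : Type*} [Fintype m] [Fintype n] [DecidableEq n]
  [Field K] [PartialOrder K] [StarRing K]

theorem schur_complement₂₂ {A : Matrix m m K} {B : Matrix m n K} {D : Matrix n n K}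
    (h : (fromBlocks A B Bᴴ D).PosDef) : (A - B * D⁻¹ * Bᴴ).PosDef := by
  have hD := h.of_fromBlocks₂₂
  have hA : A.IsHermitian := (isHermitian_fromBlocks_iff.mp h.isHermitian).1
  let := hD.isUnit.invertible
  refine of_dotProduct_mulVec_pos
    (hA.sub (isHermitian_mul_mul_conjTranspose B hD.isHermitian.inv)) fun x hx => ?_
  have hpos := h.dotProduct_mulVec_pos (x := x ⊕ᵥ -((D⁻¹ * Bᴴ) *ᵥ x))
    (fun h0 => hx (funext fun i => congrFun h0 (Sum.inl i)))
  rwa [dotProduct_mulVec, schur_complement_eq₂₂ A B _ _ hD.isHermitian, add_neg_cancel,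
    dotProduct_zero, zero_add, ← dotProduct_mulVec] at hpos

theorem lyapunov_of_schur_complement {P M : Matrix n n K} (hP : P.PosDef)
    (hS : (P - Mᴴ * P⁻¹ * M).PosDef) : (P⁻¹ - (M * P⁻¹)ᴴ * P⁻¹ * (M * P⁻¹)).PosDef := by
  have hdet : IsUnit P.det := (isUnit_iff_isUnit_det P).mp hP.isUnit
  have hcongr : star P⁻¹ * (P - Mᴴ * P⁻¹ * M) * P⁻¹ =
      P⁻¹ - (M * P⁻¹)ᴴ * P⁻¹ * (M * P⁻¹) := by
    rw [star_eq_conjTranspose, conjTranspose_nonsing_inv, hP.isHermitian.eq, mul_sub, sub_mul,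
      nonsing_inv_mul _ hdet, Matrix.one_mul, conjTranspose_mul, conjTranspose_nonsing_inv,
      hP.isHermitian.eq]
    simp only [Matrix.mul_assoc]
  rw [← hcongr]
  exact (isUnit_nonsing_inv_iff.mpr hP.isUnit).posDef_star_left_conjugate_iff.mpr hS

end Matrix.PosDef

theorem lmi_design_state_feedback_general
    (n p : ℕ)
    (F : Matrix (Fin n) (Fin n) ℝ) (G : Matrix (Fin n) (Fin p) ℝ)
    (P : Matrix (Fin n) (Fin n) ℝ)
    (H : Matrix (Fin p) (Fin n) ℝ)
    (hLMI : PosDefM (Matrix.fromBlocks P (F * P + G * H)ᵀ (F * P + G * H) P)) :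
    PosDefM P ∧
      NegDefM ((F + G * (H * P⁻¹))ᵀ * P⁻¹ * (F + G * (H * P⁻¹)) - P⁻¹) := by
  set M := F * P + G * H
  have hblock : (fromBlocks P Mᵀ Mᵀᴴ P).PosDef := by
    simpa [posDefM_iff_posDef] using hLMI
  have hP : P.PosDef := hblock.of_fromBlocks₂₂
  have hS : (P - Mᴴ * P⁻¹ * M).PosDef := by simpa using hblock.schur_complement₂₂
  have hA : F + G * (H * P⁻¹) = M * P⁻¹ := by
    rw [add_mul, mul_nonsing_inv_cancel_right _ _ ((isUnit_iff_isUnit_det P).mp hP.isUnit),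
      Matrix.mul_assoc]
  refine ⟨posDefM_iff_posDef.mpr hP, negDefM_of_posDef_neg ?_⟩
  simpa [hA] using hP.lyapunov_of_schur_complement hS

/-- **LMI-based design (Proposition 11 of the paper).** If the block LMI
`[[P, (F̃P + G̃H)ᵀ], [F̃P + G̃H, P]] ≻ 0` holds for a symmetric `P`, then `P ≻ 0`
and, setting `J = H P⁻¹` and `Ã = F̃ + G̃ J`, one has `Ãᵀ P⁻¹ Ã - P⁻¹ ≺ 0`. -/
theorem lmi_design_state_feedback
    (n p : ℕ)
    (F : Matrix (Fin n) (Fin n) ℝ) (G : Matrix (Fin n) (Fin p) ℝ)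
    (P : Matrix (Fin n) (Fin n) ℝ) (hPsym : Pᵀ = P)
    (H : Matrix (Fin p) (Fin n) ℝ)
    (hLMI : PosDefM (Matrix.fromBlocks P (F * P + G * H)ᵀ (F * P + G * H) P)) :
    PosDefM P ∧
      NegDefM ((F + G * (H * P⁻¹))ᵀ * P⁻¹ * (F + G * (H * P⁻¹)) - P⁻¹) :=
  lmi_design_state_feedback_general n p F G P H hLMI
end

section
/- Let F̃ ∈ ℝ^{n×n}, G ∈ ℝ^{q×n}, H ∈ ℝ^{n×q}, and let P ∈ ℝ^{n×n} be symmetric. Suppose the block matrix [[P − F̃^T P F̃ − G^T H^T F̃ − F̃^T H G, G^T H^T], [H G, P]] is positive definite. Then P is positive definite (hence invertible), and setting J̃ = P^{−1} H and Ã = F̃ + J̃ G, the matrix Ã^T P Ã − P is negative definite. -/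
open Matrix

/-!
The lower-right block of a positive definite block matrix is positive definite, so `P ≻ 0` and
`P` is invertible. Evaluating the LMI at `(v, -P⁻¹ H G v)` kills the second block row and leaves
the quadratic form of the Schur complement `P - F̃ᵀPF̃ - GᵀHᵀF̃ - F̃ᵀHG - GᵀHᵀP⁻¹HG`, which is
exactly `-(ÃᵀPÃ - P)` for `Ã = F̃ + P⁻¹HG` once `P` is symmetric.
-/

section

variable {ι κ : Type*} [Fintype ι] [Fintype κ]

theorem PosDefM.posDef {P : Matrix ι ι ℝ} (hP : PosDefM P) : P.PosDef :=
  posDef_iff_dotProduct_mulVec.mpr ⟨hP.1, fun v hv => by simpa using hP.2 v hv⟩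

theorem PosDefM.isUnit_det [DecidableEq ι] {P : Matrix ι ι ℝ} (hP : PosDefM P) : IsUnit P.det :=
  (isUnit_iff_isUnit_det P).mp hP.posDef.isUnit

theorem PosDefM.fromBlocks₂₂ {A : Matrix ι ι ℝ} {B : Matrix ι κ ℝ} {C : Matrix κ ι ℝ}
    {D : Matrix κ κ ℝ} (h : PosDefM (fromBlocks A B C D)) : PosDefM D := by
  refine ⟨?_, fun w hw => ?_⟩
  · have hT := h.1
    rw [fromBlocks_transpose, fromBlocks_inj] at hT
    exact hT.2.2.2
  · have hne : Sum.elim (0 : ι → ℝ) w ≠ 0 := fun h0 =>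
      hw (funext fun i => congrFun h0 (Sum.inr i))
    simpa [fromBlocks_mulVec, sumElim_dotProduct_sumElim] using h.2 _ hne

theorem dotProduct_fromBlocks_mulVec_schur {R : Type*} [CommRing R] [DecidableEq κ]
    (A : Matrix ι ι R) (B : Matrix ι κ R) (C : Matrix κ ι R) {D : Matrix κ κ R}
    (hD : IsUnit D.det) (v : ι → R) :
    Sum.elim v (-(D⁻¹ *ᵥ C *ᵥ v)) ⬝ᵥ (fromBlocks A B C D *ᵥ Sum.elim v (-(D⁻¹ *ᵥ C *ᵥ v))) =
      v ⬝ᵥ ((A - B * D⁻¹ * C) *ᵥ v) := by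
  have hDw : D *ᵥ -(D⁻¹ *ᵥ C *ᵥ v) = -(C *ᵥ v) := by
    rw [mulVec_neg, mulVec_mulVec, mul_nonsing_inv D hD, one_mulVec]
  rw [fromBlocks_mulVec, sumElim_dotProduct_sumElim, Sum.elim_comp_inl, Sum.elim_comp_inr, hDw,
    add_neg_cancel, dotProduct_zero, add_zero, sub_mulVec, mulVec_neg, ← mulVec_mulVec,
    ← mulVec_mulVec, dotProduct_sub, dotProduct_add, dotProduct_neg, sub_eq_add_neg]

theorem PosDefM.dotProduct_schur_pos [DecidableEq κ] {A : Matrix ι ι ℝ} {B : Matrix ι κ ℝ}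
    {C : Matrix κ ι ℝ} {D : Matrix κ κ ℝ} (h : PosDefM (fromBlocks A B C D)) {v : ι → ℝ}
    (hv : v ≠ 0) : 0 < v ⬝ᵥ ((A - B * D⁻¹ * C) *ᵥ v) := by
  have hne : Sum.elim v (-(D⁻¹ *ᵥ C *ᵥ v)) ≠ 0 := fun h0 =>
    hv (funext fun i => congrFun h0 (Sum.inl i))
  rw [← dotProduct_fromBlocks_mulVec_schur A B C h.fromBlocks₂₂.isUnit_det]
  exact h.2 _ hne

theorem negDefM_neg_iff {Q : Matrix ι ι ℝ} :
    NegDefM (-Q) ↔ ∀ v : ι → ℝ, v ≠ 0 → 0 < v ⬝ᵥ (Q *ᵥ v) := by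
  simp only [NegDefM, neg_mulVec, dotProduct_neg, neg_neg_iff_pos]

theorem closedLoop_lyapunov_eq_neg_schur {R : Type*} [CommRing R] [DecidableEq ι]
    (F : Matrix ι ι R) (G : Matrix κ ι R) (H : Matrix ι κ R) {P : Matrix ι ι R}
    (hPT : Pᵀ = P) (hP : IsUnit P.det) :
    (F + P⁻¹ * H * G)ᵀ * P * (F + P⁻¹ * H * G) - P =
      -(P - Fᵀ * P * F - Gᵀ * Hᵀ * F - Fᵀ * H * G - Gᵀ * Hᵀ * P⁻¹ * (H * G)) := by
  have hPinvT : (P⁻¹)ᵀ = P⁻¹ := by rw [transpose_nonsing_inv, hPT]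
  simp only [transpose_add, transpose_mul, hPinvT, Matrix.add_mul, Matrix.mul_add,
    Matrix.mul_assoc, mul_nonsing_inv_cancel_left P _ hP, nonsing_inv_mul_cancel_left P _ hP]
  abel

end

theorem lmi_design_output_feedback_general
    (n q : ℕ)
    (F : Matrix (Fin n) (Fin n) ℝ) (G : Matrix (Fin q) (Fin n) ℝ)
    (H : Matrix (Fin n) (Fin q) ℝ)
    (P : Matrix (Fin n) (Fin n) ℝ)
    (hLMI : PosDefM (Matrix.fromBlocks
      (P - Fᵀ * P * F - Gᵀ * Hᵀ * F - Fᵀ * H * G) (Gᵀ * Hᵀ) (H * G) P)) :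
    PosDefM P ∧
      NegDefM ((F + P⁻¹ * H * G)ᵀ * P * (F + P⁻¹ * H * G) - P) := by
  have hP : PosDefM P := hLMI.fromBlocks₂₂
  refine ⟨hP, ?_⟩
  rw [closedLoop_lyapunov_eq_neg_schur F G H hP.1 hP.isUnit_det, negDefM_neg_iff]
  exact fun v hv => hLMI.dotProduct_schur_pos hv

/-- **Second LMI-based design (Proposition 12 of the paper).** If the block LMI
`[[P - F̃ᵀPF̃ - GᵀHᵀF̃ - F̃ᵀHG, GᵀHᵀ], [HG, P]] ≻ 0` holds for a symmetric `P`, then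
`P ≻ 0` and, setting `J̃ = P⁻¹ H` and `Ã = F̃ + J̃ G`, one has `Ãᵀ P Ã - P ≺ 0`. -/
theorem lmi_design_output_feedback
    (n q : ℕ)
    (F : Matrix (Fin n) (Fin n) ℝ) (G : Matrix (Fin q) (Fin n) ℝ)
    (H : Matrix (Fin n) (Fin q) ℝ)
    (P : Matrix (Fin n) (Fin n) ℝ) (hPsym : Pᵀ = P)
    (hLMI : PosDefM (Matrix.fromBlocks
      (P - Fᵀ * P * F - Gᵀ * Hᵀ * F - Fᵀ * H * G) (Gᵀ * Hᵀ) (H * G) P)) :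
    PosDefM P ∧
      NegDefM ((F + P⁻¹ * H * G)ᵀ * P * (F + P⁻¹ * H * G) - P) :=
  lmi_design_output_feedback_general n q F G H P hLMI
end

section
/- Let n, m, l ∈ ℕ, A ∈ ℝ^{n×n}, B ∈ ℝ^{n×m}, C ∈ ℝ^{l×n}, D ∈ ℝ^{l×m}, L ∈ ℝ^{n×l}. For each i = 1,…,n let f_i : ℝ → ℝ be globally Lipschitz with constant L_{pi} > 0 (|f_i(a) − f_i(b)| ≤ L_{pi}|a − b| for all a, b), and let λ = max_i L_{pi}. Consider the system x(k+1) = f(A x(k) + B u(k)), y(k) = C x(k) + D u(k), and the observer x̂(k+1) = f(A x̂(k) + B u(k) + L(y(k) − ŷ(k))), ŷ(k) = C x̂(k) + D u(k), with f applied componentwise. If the 2n×2n block matrix [[(1/λ²) I_n, (A − LC)^T], [A − LC, I_n]] is positive definite, then for every input sequence u : ℕ → ℝ^m and all initial conditions x(0), x̂(0) ∈ ℝ^n, the estimation error converges: ‖x(k) − x̂(k)‖ → 0 as k → ∞ (Euclidean norm). -/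
open Matrix Filter
open scoped Matrix.Norms.L2Operator

/-! Testing the LMI on the vector `(a, -(A - LC) a)` gives `λ² ‖(A - LC) a‖² < ‖a‖²` for `a ≠ 0`,
and compactness of the unit sphere upgrades this to `‖λ (A - LC)‖ < 1` in the ℓ² operator norm.
The plant and observer update `f` at arguments differing by `(A - LC) e(k)`, where
`e = x - x̂`, so the componentwise `λ`-Lipschitz bound gives
`‖e(k+1)‖ ≤ ‖λ (A - LC)‖ ‖e(k)‖`: the error decays geometrically. -/

open WithLp

lemma tendsto_zero_of_le_mul_of_lt_one {a : ℕ → ℝ} {q : ℝ} (hq₀ : 0 ≤ q) (hq₁ : q < 1)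
    (ha : ∀ k, 0 ≤ a k) (hstep : ∀ k, a (k + 1) ≤ q * a k) :
    Tendsto a atTop (nhds 0) := by
  refine squeeze_zero ha (fun k => le_geom hq₀ k fun j _ => hstep j) ?_
  simpa using (tendsto_pow_atTop_nhds_zero_of_lt_one hq₀ hq₁).mul_const (a 0)

lemma ContinuousLinearMap.norm_lt_one_of_norm_apply_lt {E F : Type*}
    [NormedAddCommGroup E] [NormedSpace ℝ E] [FiniteDimensional ℝ E]
    [SeminormedAddCommGroup F] [NormedSpace ℝ F]
    (T : E →L[ℝ] F) (hT : ∀ x, x ≠ 0 → ‖T x‖ < ‖x‖) : ‖T‖ < 1 := by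
  rcases subsingleton_or_nontrivial E with hE | hE
  · simp [Subsingleton.elim T 0]
  rw [← T.sSup_sphere_eq_norm, (isCompact_sphere 0 1).sSup_lt_iff_of_continuous
    (NormedSpace.sphere_nonempty.mpr zero_le_one) (by fun_prop)]
  intro x hx
  have hx1 : ‖x‖ = 1 := mem_sphere_zero_iff_norm.mp hx
  exact hx1 ▸ hT x (ne_zero_of_norm_ne_zero (hx1 ▸ one_ne_zero))

lemma EuclideanSpace.lipschitzWith_map {ι : Type*} [Fintype ι] {f : ι → ℝ → ℝ} {K : NNReal}
    (hf : ∀ i, LipschitzWith K (f i)) :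
    LipschitzWith K fun x : EuclideanSpace ℝ ι => toLp 2 fun i => f i (x i) := by
  refine LipschitzWith.of_dist_le_mul fun x y => ?_
  rw [← sq_le_sq₀ dist_nonneg (by positivity), mul_pow, EuclideanSpace.dist_sq_eq,
    EuclideanSpace.dist_sq_eq, Finset.mul_sum]
  refine Finset.sum_le_sum fun i _ => ?_
  rw [← mul_pow]
  exact pow_le_pow_left₀ dist_nonneg ((hf i).dist_le_mul _ _) 2

lemma eNorm_eq_norm_toLp_s11 {ι : Type*} [Fintype ι] (v : ι → ℝ) :
    eNorm v = ‖(toLp 2 v : EuclideanSpace ℝ ι)‖ := by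
  simp [eNorm, EuclideanSpace.norm_eq]

lemma PosDefM.dotProduct_mulVec_self_lt {ι κ : Type*} [Fintype ι] [Fintype κ]
    [DecidableEq ι] [DecidableEq κ] {c : ℝ} {M : Matrix κ ι ℝ}
    (hP : PosDefM (fromBlocks (c • (1 : Matrix ι ι ℝ)) Mᵀ M 1)) {a : ι → ℝ} (ha : a ≠ 0) :
    (M *ᵥ a) ⬝ᵥ (M *ᵥ a) < c * (a ⬝ᵥ a) := by
  have hv : (Sum.elim a (-(M *ᵥ a)) : ι ⊕ κ → ℝ) ≠ 0 := fun h =>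
    ha (funext fun i => congrFun h (Sum.inl i))
  have hq := hP.2 _ hv
  simp only [fromBlocks_mulVec, sumElim_dotProduct_sumElim, Sum.elim_comp_inl,
    Sum.elim_comp_inr, smul_mulVec, one_mulVec, mulVec_neg, dotProduct_add, dotProduct_neg,
    neg_dotProduct, dotProduct_smul, smul_eq_mul] at hq
  rw [dotProduct_mulVec, vecMul_transpose] at hq
  linarith

lemma PosDefM.norm_smul_toEuclideanCLM_lt_one {ι : Type*} [Fintype ι] [DecidableEq ι]
    {lam : ℝ} {M : Matrix ι ι ℝ}
    (hP : PosDefM (fromBlocks ((1 / lam ^ 2) • (1 : Matrix ι ι ℝ)) Mᵀ M 1)) :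
    ‖lam • toEuclideanCLM (𝕜 := ℝ) M‖ < 1 := by
  refine ContinuousLinearMap.norm_lt_one_of_norm_apply_lt _ fun x hx => ?_
  rcases eq_or_ne lam 0 with rfl | hlam
  · simpa using hx
  have hMx := hP.dotProduct_mulVec_self_lt (a := ofLp x) (by simpa using hx)
  have hsq : ∀ y : EuclideanSpace ℝ ι, ‖y‖ ^ 2 = ofLp y ⬝ᵥ ofLp y := fun y => by
    rw [EuclideanSpace.real_norm_sq_eq]
    simp [dotProduct, sq]
  rw [← sq_lt_sq₀ (norm_nonneg _) (norm_nonneg _), _root_.smul_apply, norm_smul, mul_pow,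
    hsq, hsq, ofLp_toEuclideanCLM, Real.norm_eq_abs, sq_abs]
  calc lam ^ 2 * (M *ᵥ ofLp x ⬝ᵥ M *ᵥ ofLp x) < lam ^ 2 * (1 / lam ^ 2 * (ofLp x ⬝ᵥ ofLp x)) :=
        mul_lt_mul_of_pos_left hMx (by positivity)
    _ = ofLp x ⬝ᵥ ofLp x := by field_simp

lemma observer_preactivation_sub {n m l : Type*} [Fintype n] [Fintype m] [Fintype l]
    (A : Matrix n n ℝ) (B : Matrix n m ℝ) (C : Matrix l n ℝ) (D : Matrix l m ℝ)
    (L : Matrix n l ℝ) (u : m → ℝ) (x xh : n → ℝ) :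
    (A *ᵥ x + B *ᵥ u) - (A *ᵥ xh + B *ᵥ u + L *ᵥ ((C *ᵥ x + D *ᵥ u) - (C *ᵥ xh + D *ᵥ u)))
      = (A - L * C) *ᵥ (x - xh) := by
  simp only [sub_mulVec, mulVec_sub, mulVec_add, ← mulVec_mulVec]
  abel

theorem observer_convergence_general
    (n m l : ℕ)
    (A : Matrix (Fin n) (Fin n) ℝ) (B : Matrix (Fin n) (Fin m) ℝ)
    (C : Matrix (Fin l) (Fin n) ℝ) (D : Matrix (Fin l) (Fin m) ℝ)
    (L : Matrix (Fin n) (Fin l) ℝ)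
    (f : Fin n → ℝ → ℝ) (Lp : Fin n → ℝ)
    (hLip : ∀ i, ∀ a b : ℝ, |f i a - f i b| ≤ Lp i * |a - b|)
    (lam : ℝ) (hlam_ub : ∀ i, Lp i ≤ lam)
    (hLMI : PosDefM (Matrix.fromBlocks
      ((1 / lam ^ 2) • (1 : Matrix (Fin n) (Fin n) ℝ)) (A - L * C)ᵀ (A - L * C) 1))
    (u : ℕ → Fin m → ℝ) (x xh : ℕ → Fin n → ℝ)
    (hx : ∀ k, x (k + 1) = fun i => f i ((A *ᵥ x k + B *ᵥ u k) i))
    (hxh : ∀ k, xh (k + 1) = fun i =>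
      f i ((A *ᵥ xh k + B *ᵥ u k
        + L *ᵥ ((C *ᵥ x k + D *ᵥ u k) - (C *ᵥ xh k + D *ᵥ u k))) i)) :
    Tendsto (fun k => eNorm (x k - xh k)) atTop (nhds 0) := by
  set T := lam • toEuclideanCLM (𝕜 := ℝ) (A - L * C)
  have hf : ∀ i, LipschitzWith ‖lam‖₊ (f i) := fun i =>
    LipschitzWith.of_dist_le_mul fun a b => by
      rw [Real.dist_eq, Real.dist_eq, coe_nnnorm, Real.norm_eq_abs]
      exact (hLip i a b).trans <|
        mul_le_mul_of_nonneg_right ((hlam_ub i).trans (le_abs_self lam)) (abs_nonneg _)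
  refine tendsto_zero_of_le_mul_of_lt_one (norm_nonneg T) hLMI.norm_smul_toEuclideanCLM_lt_one
    (fun k => Real.sqrt_nonneg _) fun k => ?_
  rw [eNorm_eq_norm_toLp_s11, eNorm_eq_norm_toLp_s11, toLp_sub, toLp_sub, ← dist_eq_norm, hx, hxh]
  calc _ ≤ ‖lam‖₊ * dist (toLp 2 (A *ᵥ x k + B *ᵥ u k)) (toLp 2 (A *ᵥ xh k + B *ᵥ u k
        + L *ᵥ ((C *ᵥ x k + D *ᵥ u k) - (C *ᵥ xh k + D *ᵥ u k)))) :=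
        (EuclideanSpace.lipschitzWith_map hf).dist_le_mul _ _
    _ = ‖T (toLp 2 (x k) - toLp 2 (xh k))‖ := by
        rw [dist_eq_norm, ← toLp_sub, observer_preactivation_sub, ← toLp_sub, _root_.smul_apply,
          toEuclideanCLM_toLp, norm_smul, coe_nnnorm]
    _ ≤ ‖T‖ * ‖toLp 2 (x k) - toLp 2 (xh k)‖ := T.le_opNorm _

/-- **Observer convergence (Proposition 13 of the paper).** With `λ = max_i L_{pi}`,
if the block LMI `[[(1/λ²) I, (A - LC)ᵀ], [A - LC, I]] ≻ 0` holds, then for every input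
sequence and all initial conditions the observer estimation error converges to zero. -/
theorem observer_convergence
    (n m l : ℕ)
    (A : Matrix (Fin n) (Fin n) ℝ) (B : Matrix (Fin n) (Fin m) ℝ)
    (C : Matrix (Fin l) (Fin n) ℝ) (D : Matrix (Fin l) (Fin m) ℝ)
    (L : Matrix (Fin n) (Fin l) ℝ)
    (f : Fin n → ℝ → ℝ) (Lp : Fin n → ℝ)
    (hLp : ∀ i, 0 < Lp i)
    (hLip : ∀ i, ∀ a b : ℝ, |f i a - f i b| ≤ Lp i * |a - b|)
    (lam : ℝ) (hlam_ub : ∀ i, Lp i ≤ lam) (hlam_mem : ∃ i, Lp i = lam)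
    (hLMI : PosDefM (Matrix.fromBlocks
      ((1 / lam ^ 2) • (1 : Matrix (Fin n) (Fin n) ℝ)) (A - L * C)ᵀ (A - L * C) 1))
    (u : ℕ → Fin m → ℝ) (x xh : ℕ → Fin n → ℝ)
    (hx : ∀ k, x (k + 1) = fun i => f i ((A *ᵥ x k + B *ᵥ u k) i))
    (hxh : ∀ k, xh (k + 1) = fun i =>
      f i ((A *ᵥ xh k + B *ᵥ u k
        + L *ᵥ ((C *ᵥ x k + D *ᵥ u k) - (C *ᵥ xh k + D *ᵥ u k))) i)) :
    Tendsto (fun k => eNorm (x k - xh k)) atTop (nhds 0) :=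
  observer_convergence_general n m l A B C D L f Lp hLip lam hlam_ub hLMI u x xh hx hxh
end

section
/- Let n, m, l ∈ ℕ, A ∈ ℝ^{n×n}, B ∈ ℝ^{n×m}, C ∈ ℝ^{l×n}, D ∈ ℝ^{l×m}, L ∈ ℝ^{n×l}. For each i = 1,…,n let f_i : ℝ → ℝ be globally Lipschitz with constant L_{pi} > 0 (|f_i(a) − f_i(b)| ≤ L_{pi}|a − b| for all a, b), and let λ = max_i L_{pi}. Consider the system x(k+1) = f(A x(k) + B u(k)), y(k) = C x(k) + D u(k), and the observer x̂(k+1) = f(A x̂(k) + B u(k) + L(y(k) − ŷ(k))), ŷ(k) = C x̂(k) + D u(k), with f applied componentwise, and let e(k) = x(k) − x̂(k). Then for every k and every input u(k): ‖e(k+1)‖ ≤ λ ‖A − LC‖ ‖e(k)‖, where ‖A − LC‖ is the ℓ²-operator norm and the vector norms are Euclidean. -/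
open Matrix
open scoped Matrix.Norms.L2Operator

section eNorm

variable {ι κ : Type*} [Fintype ι] [Fintype κ]

lemma eNorm_eq_norm (v : ι → ℝ) : eNorm v = ‖(EuclideanSpace.equiv ι ℝ).symm v‖ := by
  simp [EuclideanSpace.norm_eq, eNorm]

lemma eNorm_smul (c : ℝ) (v : ι → ℝ) : eNorm (c • v) = |c| * eNorm v := by
  simp only [eNorm_eq_norm, map_smul, norm_smul, Real.norm_eq_abs]

lemma eNorm_le_eNorm_of_abs_le {v w : ι → ℝ} (h : ∀ i, |v i| ≤ |w i|) : eNorm v ≤ eNorm w :=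
  Real.sqrt_le_sqrt <| Finset.sum_le_sum fun i _ => sq_le_sq.mpr (h i)

lemma eNorm_mulVec_le [DecidableEq κ] (M : Matrix ι κ ℝ) (v : κ → ℝ) :
    eNorm (M *ᵥ v) ≤ ‖M‖ * eNorm v := by
  simp only [eNorm_eq_norm]
  exact M.l2_opNorm_mulVec ((EuclideanSpace.equiv κ ℝ).symm v)

lemma eNorm_map_sub_map_le {f : ι → ℝ → ℝ} {K : ℝ} (hK : 0 ≤ K)
    (hf : ∀ i a b, |f i a - f i b| ≤ K * |a - b|) (v w : ι → ℝ) :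
    eNorm (fun i => f i (v i) - f i (w i)) ≤ K * eNorm (v - w) := by
  calc eNorm (fun i => f i (v i) - f i (w i))
      ≤ eNorm (K • (v - w)) := eNorm_le_eNorm_of_abs_le fun i => by
        simpa [abs_mul, abs_of_nonneg hK] using hf i (v i) (w i)
    _ = K * eNorm (v - w) := by rw [eNorm_smul, abs_of_nonneg hK]

end eNorm

lemma observer_error_eq_mulVec {R ι κ μ : Type*} [CommRing R] [Fintype ι] [Fintype κ]
    [Fintype μ] (A : Matrix ι ι R) (B : Matrix ι κ R) (C : Matrix μ ι R) (D : Matrix μ κ R)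
    (L : Matrix ι μ R) (x xh : ι → R) (u : κ → R) :
    (A *ᵥ x + B *ᵥ u) - (A *ᵥ xh + B *ᵥ u + L *ᵥ ((C *ᵥ x + D *ᵥ u) - (C *ᵥ xh + D *ᵥ u)))
      = (A - L * C) *ᵥ (x - xh) := by
  rw [add_sub_add_right_eq_sub, ← mulVec_sub, mulVec_mulVec, sub_mulVec, mulVec_sub A, mulVec_sub (L * C)]
  abel

/-- **One-step observer error contraction** (key step of Proposition 13 of the paper):
with `λ = max_i L_{pi}`, the estimation error `e(k) = x(k) - x̂(k)` of the observer
satisfies `‖e(k+1)‖ ≤ λ ‖A - LC‖ ‖e(k)‖`, with `‖A - LC‖` the ℓ²-operator norm. -/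
theorem observer_one_step_bound
    (n m l : ℕ)
    (A : Matrix (Fin n) (Fin n) ℝ) (B : Matrix (Fin n) (Fin m) ℝ)
    (C : Matrix (Fin l) (Fin n) ℝ) (D : Matrix (Fin l) (Fin m) ℝ)
    (L : Matrix (Fin n) (Fin l) ℝ)
    (f : Fin n → ℝ → ℝ) (Lp : Fin n → ℝ)
    (hLp : ∀ i, 0 < Lp i)
    (hLip : ∀ i, ∀ a b : ℝ, |f i a - f i b| ≤ Lp i * |a - b|)
    (lam : ℝ) (hlam_ub : ∀ i, Lp i ≤ lam) (hlam_mem : ∃ i, Lp i = lam)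
    (x xh : Fin n → ℝ) (u : Fin m → ℝ) :
    eNorm ((fun i => f i ((A *ᵥ x + B *ᵥ u) i))
        - (fun i => f i ((A *ᵥ xh + B *ᵥ u
            + L *ᵥ ((C *ᵥ x + D *ᵥ u) - (C *ᵥ xh + D *ᵥ u))) i)))
      ≤ lam * ‖A - L * C‖ * eNorm (x - xh) := by
  have hlam : 0 ≤ lam := by
    obtain ⟨i, rfl⟩ := hlam_mem
    exact (hLp i).le
  have hf : ∀ i a b, |f i a - f i b| ≤ lam * |a - b| := fun i a b =>
    (hLip i a b).trans (mul_le_mul_of_nonneg_right (hlam_ub i) (abs_nonneg _))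
  calc _ ≤ lam * eNorm ((A *ᵥ x + B *ᵥ u)
          - (A *ᵥ xh + B *ᵥ u + L *ᵥ ((C *ᵥ x + D *ᵥ u) - (C *ᵥ xh + D *ᵥ u)))) :=
        eNorm_map_sub_map_le hlam hf _ _
    _ = lam * eNorm ((A - L * C) *ᵥ (x - xh)) := by rw [observer_error_eq_mulVec]
    _ ≤ lam * (‖A - L * C‖ * eNorm (x - xh)) := by gcongr; exact eNorm_mulVec_le _ _
    _ = lam * ‖A - L * C‖ * eNorm (x - xh) := (mul_assoc _ _ _).symm
end

section
/- Consider the closed-loop system with explicit integral action: χ(k+1) = f_χ(A_χ χ(k) + A_η η(k) + B_χ r(k)), η(k+1) = −C_χ χ(k) + η(k) + r(k), y_s(k) = C_χ χ(k), with state (χ, η) ∈ ℝ^{n_χ} × ℝ^{l_s}, reference input r(k) ∈ ℝ^{l_s}, and f_χ applied componentwise with f_χ(0) = 0. Suppose there exist an index i ∈ {1,…,l_s} and a constant y_max ∈ ℝ such that (C_χ χ)_i ≤ y_max for all χ ∈ ℝ^{n_χ} (or, symmetrically, a constant y_min with (C_χ χ)_i ≥ y_min for all χ). Then this system is not incrementally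 input-to-state stable (δISS): no class-KL function β and class-K∞ function γ satisfy the δISS bound. -/
open Matrix Filter

lemma eNorm_zero' {ι : Type*} [Fintype ι] : eNorm (0 : ι → ℝ) = 0 := by
  simp [eNorm]

lemma abs_le_eNorm {ι : Type*} [Fintype ι] (v : ι → ℝ) (i : ι) : |v i| ≤ eNorm v := by
  rw [← Real.sqrt_sq_eq_abs]
  exact Real.sqrt_le_sqrt
    (Finset.single_le_sum (fun j _ => sq_nonneg (v j)) (Finset.mem_univ i))

/-- **Obstruction to δISS with explicit integral action (Proposition 15 of the paper).**
If some component of the output `y_s = C_χ χ` is bounded above (or below) uniformly in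
`χ`, then the closed-loop system with integral action
`χ⁺ = f_χ(A_χ χ + A_η η + B_χ r)`, `η⁺ = -C_χ χ + η + r` cannot be δISS. -/
theorem integral_action_not_deltaISS
    (nχ ls : ℕ)
    (Aχ : Matrix (Fin nχ) (Fin nχ) ℝ) (Aη : Matrix (Fin nχ) (Fin ls) ℝ)
    (Bχ : Matrix (Fin nχ) (Fin ls) ℝ) (Cχ : Matrix (Fin ls) (Fin nχ) ℝ)
    (fχ : Fin nχ → ℝ → ℝ) (hf0 : ∀ i, fχ i 0 = 0)
    (hbound :
      (∃ (i : Fin ls) (ymax : ℝ), ∀ χ : Fin nχ → ℝ, (Cχ *ᵥ χ) i ≤ ymax) ∨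
      (∃ (i : Fin ls) (ymin : ℝ), ∀ χ : Fin nχ → ℝ, ymin ≤ (Cχ *ᵥ χ) i)) :
    ¬ DeltaISS (fun (x : Fin nχ ⊕ Fin ls → ℝ) (r : Fin ls → ℝ) =>
        Sum.elim
          (fun i => fχ i ((Aχ *ᵥ (x ∘ Sum.inl) + Aη *ᵥ (x ∘ Sum.inr) + Bχ *ᵥ r) i))
          (fun i => (-(Cχ *ᵥ (x ∘ Sum.inl)) + (x ∘ Sum.inr) + r) i)) := by
  
  rintro ⟨β, γ, hβ, hγ, h⟩
  set F : (Fin nχ ⊕ Fin ls → ℝ) → (Fin ls → ℝ) → (Fin nχ ⊕ Fin ls → ℝ) :=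
    (fun (x : Fin nχ ⊕ Fin ls → ℝ) (r : Fin ls → ℝ) =>
        Sum.elim
          (fun i => fχ i ((Aχ *ᵥ (x ∘ Sum.inl) + Aη *ᵥ (x ∘ Sum.inr) + Bχ *ᵥ r) i))
          (fun i => (-(Cχ *ᵥ (x ∘ Sum.inl)) + (x ∘ Sum.inr) + r) i)) with hF
  have hzero : ∀ k, traj F 0 (fun _ => 0) k = 0 := by
    intro k
    induction k with
    | zero => rfl
    | succ k ih =>
      show F (traj F 0 (fun _ => 0) k) 0 = 0
      rw [ih]
      funext j
      have h1 : ((0 : Fin nχ ⊕ Fin ls → ℝ) ∘ Sum.inl) = (0 : Fin nχ → ℝ) := rfl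
      have h2 : ((0 : Fin nχ ⊕ Fin ls → ℝ) ∘ Sum.inr) = (0 : Fin ls → ℝ) := rfl
      cases j with
      | inl j => simp [hF, h1, h2, Matrix.mulVec_zero, hf0]
      | inr j => simp [hF, h1, h2, Matrix.mulVec_zero]
  -- common machinery, parameterized by the reference rbar
  have key : ∀ (rbar : Fin ls → ℝ) (i : Fin ls),
      (∀ k : ℕ, (k : ℝ) ≤ |traj F 0 (fun _ => rbar) k (Sum.inr i)|) → False := by
    intro rbar i hgrow
    set d := eNorm rbar with hd
    have hd0 : 0 ≤ d := Real.sqrt_nonneg _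
    have hub : ∀ k, eNorm (traj F 0 (fun _ => rbar) k) ≤ γ d := by
      intro k
      have := h k 0 0 d hd0 (fun _ => rbar) (fun _ => 0) (fun j => by
        simp only [sub_zero]; exact le_of_eq rfl)
      simpa [hzero, hβ.2.2.1, eNorm_zero'] using this
    obtain ⟨k, hk⟩ := exists_nat_gt (γ d)
    have h1 : (k : ℝ) ≤ γ d :=
      le_trans (hgrow k) (le_trans (abs_le_eNorm _ _) (hub k))
    linarith
  rcases hbound with ⟨i, ymax, hy⟩ | ⟨i, ymin, hy⟩
  · refine key (fun j => if j = i then ymax + 1 else 0) i ?_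
    set rbar : Fin ls → ℝ := fun j => if j = i then ymax + 1 else 0 with hr
    have hgrow : ∀ k : ℕ, (k : ℝ) ≤ traj F 0 (fun _ => rbar) k (Sum.inr i) := by
      intro k
      induction k with
      | zero => simp [traj]
      | succ k ih =>
        show (k + 1 : ℕ) ≤ F (traj F 0 (fun _ => rbar) k) rbar (Sum.inr i)
        have hstep : F (traj F 0 (fun _ => rbar) k) rbar (Sum.inr i) =
            -(Cχ *ᵥ (traj F 0 (fun _ => rbar) k ∘ Sum.inl)) i +
              traj F 0 (fun _ => rbar) k (Sum.inr i) + (ymax + 1) := by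
          simp [hF, hr]
        rw [hstep]
        have := hy (traj F 0 (fun _ => rbar) k ∘ Sum.inl)
        push_cast
        linarith
    exact fun k => le_trans (hgrow k) (le_abs_self _)
  · refine key (fun j => if j = i then ymin - 1 else 0) i ?_
    set rbar : Fin ls → ℝ := fun j => if j = i then ymin - 1 else 0 with hr
    have hgrow : ∀ k : ℕ, traj F 0 (fun _ => rbar) k (Sum.inr i) ≤ -(k : ℝ) := by
      intro k
      induction k with
      | zero => simp [traj]
      | succ k ih =>
        show F (traj F 0 (fun _ => rbar) k) rbar (Sum.inr i) ≤ -((k + 1 : ℕ) : ℝ)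
        have hstep : F (traj F 0 (fun _ => rbar) k) rbar (Sum.inr i) =
            -(Cχ *ᵥ (traj F 0 (fun _ => rbar) k ∘ Sum.inl)) i +
              traj F 0 (fun _ => rbar) k (Sum.inr i) + (ymin - 1) := by
          simp [hF, hr]
        rw [hstep]
        have := hy (traj F 0 (fun _ => rbar) k ∘ Sum.inl)
        push_cast
        linarith
    intro k
    have := hgrow k
    rw [abs_of_nonpos (by linarith [Nat.cast_nonneg (α := ℝ) k])]
    linarith
end
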